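/- arXiv:2206.10575 — 10 statements merged into one kernel-verified Lean document; each statement's English description precedes it below -/
import Mathlib

section
/- Let C be a real p×n matrix such that C·Cᵀ is invertible, let d ∈ ℝᵖ, and define P_c = I − Cᵀ(C·Cᵀ)⁻¹C and d_c = Cᵀ(C·Cᵀ)⁻¹d. Let F : ℝⁿ → ℝⁿ be continuous and monotone on C_= = {x ∈ ℝⁿ : C x = d}, and let β > 0. Then for any y, λ ∈ ℝⁿ, the equation x + (1/β)·P_c F(x) − P_c y + (1/β)·P_c λ − d_c = 0 has exactly one solution x ∈ ℝⁿ, and this solution satisfies C x = d. -/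
/-!
Since `P_c` is the orthogonal projection onto `ker C` and `C d_c = d`, the equation reads
`x + P_c (β⁻¹ F x) = P_c (y - β⁻¹ λ) + d_c`, so every solution lies in `d_c + ker C = C_=`, and
monotonicity of `F` there gives uniqueness. For existence, `z ↦ z + P_c (β⁻¹ F (d_c + z))` is a
continuous strongly monotone self-map of `ker C`, hence onto.

A continuous strongly monotone map `G` of a finite-dimensional inner product space is onto, by
induction on the dimension: for a unit vector `e`, `G` is strongly monotone along every line in
direction `e`, so the intermediate value theorem gives `τ w` with `⟪G (w + τ w • e), e⟫ = ⟪b, e⟫`.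
Strong monotonicity makes `τ` continuous, and projecting `G (w + τ w • e)` onto `eᗮ` gives a
continuous strongly monotone map of `eᗮ`, of one dimension less.
-/

open scoped RealInnerProductSpace
open Matrix Module Function

section InnerProductSpace

variable {E : Type*} [NormedAddCommGroup E] [InnerProductSpace ℝ E]

def StrongMonotone (c : ℝ) (G : E → E) : Prop :=
  ∀ x y, c * ‖x - y‖ ^ 2 ≤ ⟪G x - G y, x - y⟫

lemma strongMonotone_real_iff {c : ℝ} {f : ℝ → ℝ} :
    StrongMonotone c f ↔ ∀ s t, c * (s - t) ^ 2 ≤ (f s - f t) * (s - t) := by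
  simp only [StrongMonotone, Real.norm_eq_abs, sq_abs, RCLike.inner_apply, conj_trivial,
    mul_comm (_ - _) (f _ - _)]

lemma StrongMonotone.surjective_of_real {c : ℝ} {f : ℝ → ℝ} (hf : StrongMonotone c f)
    (hc : 0 < c) (hfc : Continuous f) : Surjective f := by
  rw [strongMonotone_real_iff] at hf
  have above : ∀ t, 0 < t → f 0 + c * t ≤ f t := fun t ht => by nlinarith [hf t 0]
  have below : ∀ t, t < 0 → f t ≤ f 0 + c * t := fun t ht => by nlinarith [hf t 0]
  intro a
  set T := (|a - f 0| + 1) / c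
  have hT : c * T = |a - f 0| + 1 := mul_div_cancel₀ _ hc.ne'
  have hT0 : 0 < T := by positivity
  refine mem_range_of_exists_le_of_exists_ge hfc ⟨-T, ?_⟩ ⟨T, ?_⟩
  · linarith [below (-T) (neg_neg_of_pos hT0), neg_abs_le (a - f 0)]
  · linarith [above T hT0, le_abs_self (a - f 0)]

lemma eq_of_orthogonalProjectionOnto_eq_of_inner_eq {e u v : E}
    (hP : (ℝ ∙ e)ᗮ.orthogonalProjectionOnto u = (ℝ ∙ e)ᗮ.orthogonalProjectionOnto v)
    (he : ⟪u, e⟫ = ⟪v, e⟫) : u = v := by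
  have hmem : u - v ∈ (ℝ ∙ e)ᗮ := by
    rw [Submodule.mem_orthogonal_singleton_iff_inner_left, inner_sub_left, he, sub_self]
  rw [← sub_eq_zero, ← Submodule.starProjection_eq_self_iff.mpr hmem, map_sub,
    Submodule.starProjection_apply, Submodule.starProjection_apply, hP, sub_self]

section Line

variable {c : ℝ} {G : E → E} {e : E}

lemma StrongMonotone.restrict_line (hG : StrongMonotone c G) (he : ‖e‖ = 1) (w : E) :
    StrongMonotone c fun t : ℝ => ⟪G (w + t • e), e⟫ := by
  rw [strongMonotone_real_iff]
  intro s t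
  have hsub : (w + s • e) - (w + t • e) = (s - t) • e := by module
  have := hG (w + s • e) (w + t • e)
  rwa [hsub, norm_smul, he, mul_one, Real.norm_eq_abs, sq_abs, real_inner_smul_right,
    inner_sub_left, mul_comm (s - t)] at this

lemma StrongMonotone.exists_inner_line_eq (hG : StrongMonotone c G) (hc : 0 < c)
    (hGc : Continuous G) (he : ‖e‖ = 1) (w : E) (a : ℝ) : ∃ t : ℝ, ⟪G (w + t • e), e⟫ = a :=
  (hG.restrict_line he w).surjective_of_real hc (by fun_prop) a

lemma StrongMonotone.mul_abs_sub_le_of_inner_line_eq (hG : StrongMonotone c G) (he : ‖e‖ = 1)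
    {w w' : E} {t t' : ℝ} (h : ⟪G (w + t • e), e⟫ = ⟪G (w' + t' • e), e⟫) :
    c * |t - t'| ≤ ‖G (w' + t • e) - G (w + t • e)‖ := by
  set N := ‖G (w' + t • e) - G (w + t • e)‖
  have hN : |⟪G (w' + t • e), e⟫ - ⟪G (w + t • e), e⟫| ≤ N := by
    simpa [← inner_sub_left, he] using abs_real_inner_le_norm (G (w' + t • e) - G (w + t • e)) e
  have key : c * |t - t'| ^ 2 ≤ N * |t - t'| := calc
    c * |t - t'| ^ 2 ≤ (⟪G (w' + t • e), e⟫ - ⟪G (w + t • e), e⟫) * (t - t') := by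
      rw [sq_abs, h]; exact strongMonotone_real_iff.mp (hG.restrict_line he w') t t'
    _ ≤ |⟪G (w' + t • e), e⟫ - ⟪G (w + t • e), e⟫| * |t - t'| := by
      rw [← abs_mul]; exact le_abs_self _
    _ ≤ N * |t - t'| := by gcongr
  rcases (abs_nonneg (t - t')).eq_or_lt with h0 | hpos
  · rw [← h0, mul_zero]; positivity
  · nlinarith

lemma StrongMonotone.continuous_of_inner_line_eq (hG : StrongMonotone c G) (hc : 0 < c)
    (hGc : Continuous G) (he : ‖e‖ = 1) {a : ℝ} {τ : E → ℝ}
    (hτ : ∀ w, ⟪G (w + τ w • e), e⟫ = a) : Continuous τ := by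
  refine continuous_iff_continuousAt.mpr fun w₀ => ?_
  rw [ContinuousAt, tendsto_iff_dist_tendsto_zero]
  have hbound : Continuous fun w => c⁻¹ * ‖G (w + τ w₀ • e) - G (w₀ + τ w₀ • e)‖ := by fun_prop
  refine squeeze_zero (fun _ => dist_nonneg) (fun w => ?_) (by simpa using hbound.tendsto w₀)
  rw [Real.dist_eq, abs_sub_comm, le_inv_mul_iff₀ hc]
  exact hG.mul_abs_sub_le_of_inner_line_eq he ((hτ w₀).trans (hτ w).symm)

lemma StrongMonotone.orthogonalProjectionOnto_comp_line (hG : StrongMonotone c G) (hc : 0 ≤ c)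
    {a : ℝ} {τ : E → ℝ} (hτ : ∀ w, ⟪G (w + τ w • e), e⟫ = a) :
    StrongMonotone c fun w : (ℝ ∙ e)ᗮ => (ℝ ∙ e)ᗮ.orthogonalProjectionOnto (G (w + τ w • e)) := by
  intro w w'
  set x := (w : E) + τ w • e
  set x' := (w' : E) + τ w' • e
  have hGe : ⟪G x - G x', e⟫ = 0 := by rw [inner_sub_left, hτ, hτ, sub_self]
  have hwe : ⟪(w : E) - w', e⟫ = 0 :=
    Submodule.mem_orthogonal_singleton_iff_inner_left.mp (w - w').2
  have hsub : x - x' = ((w : E) - w') + (τ w - τ w') • e := by module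
  have hnorm : ‖(w : E) - w'‖ ^ 2 ≤ ‖x - x'‖ ^ 2 := by
    rw [hsub, sq, sq, norm_add_sq_eq_norm_sq_add_norm_sq_real
      (by rw [real_inner_smul_right, hwe, mul_zero])]
    exact le_add_of_nonneg_right (mul_self_nonneg _)
  calc c * ‖w - w'‖ ^ 2 = c * ‖(w : E) - w'‖ ^ 2 := by
        rw [← Submodule.coe_sub, Submodule.coe_norm]
    _ ≤ c * ‖x - x'‖ ^ 2 := by gcongr
    _ ≤ ⟪G x - G x', x - x'⟫ := hG x x'
    _ = ⟪G x - G x', (w : E) - w'⟫ := by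
      rw [hsub, inner_add_right, real_inner_smul_right, hGe, mul_zero, add_zero]
    _ = _ := by
      rw [← map_sub, Submodule.inner_orthogonalProjectionOnto_eq_of_mem_right, Submodule.coe_sub]

end Line

theorem StrongMonotone.surjective [FiniteDimensional ℝ E] {c : ℝ} {G : E → E}
    (hG : StrongMonotone c G) (hc : 0 < c) (hGc : Continuous G) : Surjective G := by
  induction hn : finrank ℝ E generalizing E with
  | zero =>
    have := finrank_zero_iff.mp hn
    exact fun b => ⟨b, Subsingleton.elim _ _⟩
  | succ m ih =>
    intro b
    have : Nontrivial E := (finrank_pos_iff (R := ℝ)).mp (by omega)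
    have : Fact (finrank ℝ E = m + 1) := ⟨hn⟩
    obtain ⟨e, he⟩ := exists_norm_eq E zero_le_one
    choose τ hτ using hG.exists_inner_line_eq hc hGc he (a := ⟪b, e⟫)
    have hτc := hG.continuous_of_inner_line_eq hc hGc he hτ
    obtain ⟨w, hw⟩ := ih (hG.orthogonalProjectionOnto_comp_line hc.le hτ) (by fun_prop)
      (Submodule.finrank_orthogonal_span_singleton
        (norm_ne_zero_iff.mp (he.trans_ne one_ne_zero)))
      ((ℝ ∙ e)ᗮ.orthogonalProjectionOnto b)
    exact ⟨w + τ w • e, eq_of_orthogonalProjectionOnto_eq_of_inner_eq hw (hτ w)⟩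

section AffineEquation

variable (V : Submodule ℝ E) {F : E → E} {a b : E}

lemma sub_mem_of_add_starProjection_eq [V.HasOrthogonalProjection] {x : E}
    (hx : x + V.starProjection (F x) = V.starProjection b + a) : x - a ∈ V := by
  have : x - a = V.starProjection b - V.starProjection (F x) := by
    linear_combination (norm := module) hx
  rw [this]
  exact V.sub_mem (V.starProjection_apply_mem b) (V.starProjection_apply_mem (F x))

lemma eq_of_add_starProjection_eq [V.HasOrthogonalProjection]
    (hF : ∀ x x', x - a ∈ V → x' - a ∈ V → 0 ≤ ⟪F x - F x', x - x'⟫) {x x' : E}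
    (hx : x + V.starProjection (F x) = V.starProjection b + a)
    (hx' : x' + V.starProjection (F x') = V.starProjection b + a) : x = x' := by
  have hxa := sub_mem_of_add_starProjection_eq V hx
  have hxa' := sub_mem_of_add_starProjection_eq V hx'
  have hmem : x - x' ∈ V := by simpa using V.sub_mem hxa hxa'
  have hsub : x - x' = V.starProjection (F x' - F x) := by
    rw [map_sub]; linear_combination (norm := module) hx - hx'
  have : ‖x - x'‖ ^ 2 ≤ 0 := calc
    ‖x - x'‖ ^ 2 = ⟪V.starProjection (F x' - F x), x - x'⟫ := by
      rw [← hsub, real_inner_self_eq_norm_sq]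
    _ = -⟪F x - F x', x - x'⟫ := by
      rw [Submodule.inner_starProjection_left_eq_right,
        Submodule.starProjection_eq_self_iff.mpr hmem, ← inner_neg_left, neg_sub]
    _ ≤ 0 := neg_nonpos.mpr (hF x x' hxa hxa')
  rw [← sub_eq_zero, ← norm_eq_zero]
  exact pow_eq_zero_iff two_ne_zero |>.mp (le_antisymm this (sq_nonneg _))

lemma exists_add_starProjection_eq [FiniteDimensional ℝ V] (hFc : Continuous F)
    (hF : ∀ x x', x - a ∈ V → x' - a ∈ V → 0 ≤ ⟪F x - F x', x - x'⟫) :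
    ∃ x, x + V.starProjection (F x) = V.starProjection b + a := by
  set G : V → V := fun z => z + V.orthogonalProjectionOnto (F (a + z))
  have hG : StrongMonotone 1 G := by
    intro z z'
    have hz : (a + z) - a ∈ V := by simp
    have hz' : (a + z') - a ∈ V := by simp
    have hmono := hF _ _ hz hz'
    rw [add_sub_add_left_eq_sub] at hmono
    have : ⟪G z - G z', z - z'⟫ = ‖z - z'‖ ^ 2 + ⟪F (a + z) - F (a + z'), (z : E) - z'⟫ := by
      simp only [G, add_sub_add_comm, ← map_sub, inner_add_left, real_inner_self_eq_norm_sq,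
        Submodule.inner_orthogonalProjectionOnto_eq_of_mem_right, Submodule.coe_sub]
    linarith
  obtain ⟨z, hz⟩ := hG.surjective one_pos (by fun_prop) (V.orthogonalProjectionOnto b)
  refine ⟨a + z, ?_⟩
  have := congrArg Subtype.val hz
  simp only [G, Submodule.coe_add] at this
  rw [Submodule.starProjection_apply, Submodule.starProjection_apply, ← this]
  abel

end AffineEquation

end InnerProductSpace

namespace Matrix

variable {m n : Type*} [Fintype m] [Fintype n] [DecidableEq m] [DecidableEq n]

lemma inner_toEuclideanLin_transpose (A : Matrix m n ℝ) (x : EuclideanSpace ℝ m)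
    (u : EuclideanSpace ℝ n) : ⟪toEuclideanLin Aᵀ x, u⟫ = ⟪x, toEuclideanLin A u⟫ := by
  rw [← conjTranspose_eq_transpose_of_trivial, toEuclideanLin_conjTranspose_eq_adjoint,
    LinearMap.adjoint_inner_left]

lemma toEuclideanLin_transpose_mul_inv_apply (C : Matrix m n ℝ) (hC : IsUnit (C * Cᵀ))
    (d : EuclideanSpace ℝ m) : toEuclideanLin C (toEuclideanLin (Cᵀ * (C * Cᵀ)⁻¹) d) = d := by
  rw [← LinearMap.comp_apply, ← toLpLin_mul_same, ← Matrix.mul_assoc,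
    mul_nonsing_inv _ ((isUnit_iff_isUnit_det _).mp hC), toLpLin_one, LinearMap.id_apply]

lemma toEuclideanLin_one_sub_transpose_mul_inv_mul (C : Matrix m n ℝ) (hC : IsUnit (C * Cᵀ))
    (v : EuclideanSpace ℝ n) :
    toEuclideanLin (1 - Cᵀ * (C * Cᵀ)⁻¹ * C) v =
      (LinearMap.ker (toEuclideanLin C)).starProjection v := by
  have hCC : C * Cᵀ * (C * Cᵀ)⁻¹ = 1 := mul_nonsing_inv _ ((isUnit_iff_isUnit_det _).mp hC)
  symm
  apply Submodule.eq_starProjection_of_mem_of_inner_eq_zero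
  · rw [LinearMap.mem_ker, ← LinearMap.comp_apply, ← toLpLin_mul_same, Matrix.mul_sub,
      Matrix.mul_one, ← Matrix.mul_assoc, ← Matrix.mul_assoc, hCC, Matrix.one_mul, sub_self,
      map_zero, LinearMap.zero_apply]
  · intro u hu
    rw [map_sub, toLpLin_one, LinearMap.sub_apply, LinearMap.id_apply, sub_sub_cancel,
      Matrix.mul_assoc, toLpLin_mul_same, LinearMap.comp_apply, inner_toEuclideanLin_transpose,
      LinearMap.mem_ker.mp hu, inner_zero_right]

end Matrix

/-- Existence, uniqueness, and feasibility of the solution of the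
`x`-equation `x + (1/β) P_c F(x) − P_c y + (1/β) P_c λ − d_c = 0` (Theorem on the
uniqueness of the solution of (W-EQ)), where `P_c = I − Cᵀ(CCᵀ)⁻¹C` and
`d_c = Cᵀ(CCᵀ)⁻¹ d`, for `F` continuous and monotone on `C_= = {x | C x = d}`. -/
theorem stmt_0 {n p : ℕ} (C : Matrix (Fin p) (Fin n) ℝ) (d : EuclideanSpace ℝ (Fin p))
    (hinv : IsUnit (C * Cᵀ))
    (F : EuclideanSpace ℝ (Fin n) → EuclideanSpace ℝ (Fin n))
    (hFcont : Continuous F)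
    (hFmono : ∀ x x' : EuclideanSpace ℝ (Fin n),
      Matrix.toEuclideanLin C x = d → Matrix.toEuclideanLin C x' = d →
      0 ≤ ⟪F x - F x', x - x'⟫)
    (β : ℝ) (hβ : 0 < β) (y lam : EuclideanSpace ℝ (Fin n)) :
    ∃ x : EuclideanSpace ℝ (Fin n),
      ((x + β⁻¹ • Matrix.toEuclideanLin (1 - Cᵀ * (C * Cᵀ)⁻¹ * C) (F x)
          - Matrix.toEuclideanLin (1 - Cᵀ * (C * Cᵀ)⁻¹ * C) y
          + β⁻¹ • Matrix.toEuclideanLin (1 - Cᵀ * (C * Cᵀ)⁻¹ * C) lam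
          - Matrix.toEuclideanLin (Cᵀ * (C * Cᵀ)⁻¹) d = 0)
        ∧ Matrix.toEuclideanLin C x = d) ∧
      ∀ x' : EuclideanSpace ℝ (Fin n),
        (x' + β⁻¹ • Matrix.toEuclideanLin (1 - Cᵀ * (C * Cᵀ)⁻¹ * C) (F x')
          - Matrix.toEuclideanLin (1 - Cᵀ * (C * Cᵀ)⁻¹ * C) y
          + β⁻¹ • Matrix.toEuclideanLin (1 - Cᵀ * (C * Cᵀ)⁻¹ * C) lam
          - Matrix.toEuclideanLin (Cᵀ * (C * Cᵀ)⁻¹) d = 0) → x' = x := by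
  set V := LinearMap.ker (Matrix.toEuclideanLin C)
  set dc := Matrix.toEuclideanLin (Cᵀ * (C * Cᵀ)⁻¹) d
  have hfeas : ∀ x, x - dc ∈ V ↔ Matrix.toEuclideanLin C x = d := fun x => by
    rw [LinearMap.sub_mem_ker_iff, Matrix.toEuclideanLin_transpose_mul_inv_apply C hinv]
  have heqn : ∀ x, x + β⁻¹ • Matrix.toEuclideanLin (1 - Cᵀ * (C * Cᵀ)⁻¹ * C) (F x)
          - Matrix.toEuclideanLin (1 - Cᵀ * (C * Cᵀ)⁻¹ * C) y
          + β⁻¹ • Matrix.toEuclideanLin (1 - Cᵀ * (C * Cᵀ)⁻¹ * C) lam - dc = 0 ↔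
        x + V.starProjection ((β⁻¹ • F) x) = V.starProjection (y - β⁻¹ • lam) + dc := fun x => by
    simp only [Matrix.toEuclideanLin_one_sub_transpose_mul_inv_mul C hinv]
    simp only [Pi.smul_apply, map_sub, map_smul]
    constructor <;> intro h <;> linear_combination (norm := module) h
  have hmono : ∀ x x', x - dc ∈ V → x' - dc ∈ V → 0 ≤ ⟪(β⁻¹ • F) x - (β⁻¹ • F) x', x - x'⟫ :=
    fun x x' hx hx' => by
      rw [Pi.smul_apply, Pi.smul_apply, ← smul_sub, real_inner_smul_left]
      exact mul_nonneg (inv_nonneg.mpr hβ.le) (hFmono x x' ((hfeas x).mp hx) ((hfeas x').mp hx'))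
  obtain ⟨x, hx⟩ := exists_add_starProjection_eq V (by fun_prop) hmono
  refine ⟨x, ⟨(heqn x).mpr hx, (hfeas x).mp (sub_mem_of_add_starProjection_eq V hx)⟩,
    fun x' hx' => eq_of_add_starProjection_eq V hmono ((heqn x').mp hx') hx⟩
end

section
/- Let C be a real p×n matrix such that C·Cᵀ is invertible, let d ∈ ℝᵖ, and define P_c = I − Cᵀ(C·Cᵀ)⁻¹C and d_c = Cᵀ(C·Cᵀ)⁻¹d. Let F : ℝⁿ → ℝⁿ be monotone on C_= = {x ∈ ℝⁿ : C x = d}, let β > 0, and fix y₀, λ₀ ∈ ℝⁿ. Define G(x) = x + (1/β)·P_c F(x) − P_c y₀ + (1/β)·P_c λ₀ − d_c. Then G is strongly monotone on C_= with modulus 1: for all x, x' with C x = d and C x' = d, ⟪G(x) − G(x'), x − x'⟫ ≥ ‖x − x'‖². -/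
open scoped RealInnerProductSpace
open Matrix

/-!
`P_c = 1 - Cᵀ(CCᵀ)⁻¹C` is a symmetric matrix that fixes `ker C`, and `x - x' ∈ ker C` when
`Cx = Cx' = d`. Since the constant terms of `G` cancel in `G x - G x'`,
`⟪G x - G x', x - x'⟫ = ‖x - x'‖² + β⁻¹ ⟪F x - F x', P_c (x - x')⟫ = ‖x - x'‖² + β⁻¹ ⟪F x - F x', x - x'⟫`,
and the last term is nonnegative by monotonicity of `F`.
-/

theorem Matrix.toEuclideanLin_one_sub_mul_apply_of_mem_ker {𝕜 m n : Type*} [RCLike 𝕜]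
    [Fintype m] [Fintype n] [DecidableEq n] (B : Matrix n m 𝕜) {C : Matrix m n 𝕜}
    {v : EuclideanSpace 𝕜 n} (hv : toEuclideanLin C v = 0) :
    toEuclideanLin (1 - B * C) v = v := by
  have hCv : C *ᵥ v.ofLp = 0 := by simpa using congrArg WithLp.ofLp hv
  ext i
  simp [← mulVec_mulVec, hCv]

theorem Matrix.isHermitian_one_sub_transpose_mul_inv_mul {m n : Type*} [Fintype m] [Fintype n]
    [DecidableEq m] [DecidableEq n] (C : Matrix m n ℝ) :
    (1 - Cᵀ * (C * Cᵀ)⁻¹ * C).IsHermitian := by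
  have hM : (C * Cᵀ)⁻¹.IsHermitian := by
    simpa [conjTranspose_eq_transpose_of_trivial] using (isHermitian_mul_conjTranspose_self C).inv
  simpa [conjTranspose_eq_transpose_of_trivial] using
    isHermitian_one.sub (isHermitian_conjTranspose_mul_mul C hM)

theorem inner_add_smul_apply_self_of_isSymmetric {E : Type*} [NormedAddCommGroup E]
    [InnerProductSpace ℝ E] {L : E →ₗ[ℝ] E} (hL : L.IsSymmetric) {u : E} (hu : L u = u)
    (c : ℝ) (v : E) : ⟪u + c • L v, u⟫ = ‖u‖ ^ 2 + c * ⟪v, u⟫ := by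
  rw [inner_add_left, real_inner_smul_left, hL, hu, real_inner_self_eq_norm_sq]

theorem stmt_1_general {n p : ℕ} (C : Matrix (Fin p) (Fin n) ℝ) (d : EuclideanSpace ℝ (Fin p))
    (F : EuclideanSpace ℝ (Fin n) → EuclideanSpace ℝ (Fin n))
    (hFmono : ∀ x x' : EuclideanSpace ℝ (Fin n),
      Matrix.toEuclideanLin C x = d → Matrix.toEuclideanLin C x' = d →
      0 ≤ ⟪F x - F x', x - x'⟫)
    (β : ℝ) (hβ : 0 < β) (y₀ lam₀ : EuclideanSpace ℝ (Fin n))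
    (G : EuclideanSpace ℝ (Fin n) → EuclideanSpace ℝ (Fin n))
    (hG : ∀ x, G x = x + β⁻¹ • Matrix.toEuclideanLin (1 - Cᵀ * (C * Cᵀ)⁻¹ * C) (F x)
          - Matrix.toEuclideanLin (1 - Cᵀ * (C * Cᵀ)⁻¹ * C) y₀
          + β⁻¹ • Matrix.toEuclideanLin (1 - Cᵀ * (C * Cᵀ)⁻¹ * C) lam₀
          - Matrix.toEuclideanLin (Cᵀ * (C * Cᵀ)⁻¹) d) :
    ∀ x x' : EuclideanSpace ℝ (Fin n),
      Matrix.toEuclideanLin C x = d → Matrix.toEuclideanLin C x' = d →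
      ‖x - x'‖ ^ 2 ≤ ⟪G x - G x', x - x'⟫ := by
  intro x x' hx hx'
  set P := toEuclideanLin (1 - Cᵀ * (C * Cᵀ)⁻¹ * C)
  have hP : P.IsSymmetric :=
    isSymmetric_toEuclideanLin_iff.mpr (isHermitian_one_sub_transpose_mul_inv_mul C)
  have hfix : P (x - x') = x - x' :=
    toEuclideanLin_one_sub_mul_apply_of_mem_ker _ (by rw [map_sub, hx, hx', sub_self])
  have hdiff : G x - G x' = (x - x') + β⁻¹ • P (F x - F x') := by
    rw [hG x, hG x', map_sub, smul_sub]
    abel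
  rw [hdiff, inner_add_smul_apply_self_of_isSymmetric hP hfix]
  exact le_add_of_nonneg_right (mul_nonneg (inv_nonneg.mpr hβ.le) (hFmono x x' hx hx'))

/-- The map `G(x) = x + (1/β) P_c F(x) − P_c y₀ + (1/β) P_c λ₀ − d_c`
is strongly monotone with modulus 1 on `C_= = {x | C x = d}`, where
`P_c = I − Cᵀ(CCᵀ)⁻¹C` and `d_c = Cᵀ(CCᵀ)⁻¹ d`, provided `F` is monotone on `C_=`. -/
theorem stmt_1 {n p : ℕ} (C : Matrix (Fin p) (Fin n) ℝ) (d : EuclideanSpace ℝ (Fin p))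
    (hinv : IsUnit (C * Cᵀ))
    (F : EuclideanSpace ℝ (Fin n) → EuclideanSpace ℝ (Fin n))
    (hFmono : ∀ x x' : EuclideanSpace ℝ (Fin n),
      Matrix.toEuclideanLin C x = d → Matrix.toEuclideanLin C x' = d →
      0 ≤ ⟪F x - F x', x - x'⟫)
    (β : ℝ) (hβ : 0 < β) (y₀ lam₀ : EuclideanSpace ℝ (Fin n))
    (G : EuclideanSpace ℝ (Fin n) → EuclideanSpace ℝ (Fin n))
    (hG : ∀ x, G x = x + β⁻¹ • Matrix.toEuclideanLin (1 - Cᵀ * (C * Cᵀ)⁻¹ * C) (F x)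
          - Matrix.toEuclideanLin (1 - Cᵀ * (C * Cᵀ)⁻¹ * C) y₀
          + β⁻¹ • Matrix.toEuclideanLin (1 - Cᵀ * (C * Cᵀ)⁻¹ * C) lam₀
          - Matrix.toEuclideanLin (Cᵀ * (C * Cᵀ)⁻¹) d) :
    ∀ x x' : EuclideanSpace ℝ (Fin n),
      Matrix.toEuclideanLin C x = d → Matrix.toEuclideanLin C x' = d →
      ‖x - x'‖ ^ 2 ≤ ⟪G x - G x', x - x'⟫ :=
  stmt_1_general C d F hFmono β hβ y₀ lam₀ G hG
end

section
/- Let 𝒞 ⊆ ℝⁿ, let F : ℝⁿ → ℝⁿ, and let x* ∈ 𝒞 satisfy ⟪F x*, z − x*⟫ ≥ 0 for all z ∈ 𝒞 (i.e., x* solves the variational inequality VI(𝒞, F)). Let x ∈ ℝⁿ and let L, M, D ≥ 0 be constants with ‖F x − F x*‖ ≤ L‖x − x*‖, ‖F x‖ ≤ M, and ‖x* − z‖ ≤ D for every z ∈ 𝒞. Then for every z ∈ 𝒞, ⟪F x, x − z⟫ ≤ (D·L + M)·‖x − x*‖; in particular the gap function satisfies 𝒢(x, 𝒞) = sup_{z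 ∈ 𝒞} ⟪F x, x − z⟫ ≤ (D·L + M)·‖x − x*‖. -/
open scoped RealInnerProductSpace

theorem inner_sub_le_of_inner_sub_nonneg {E : Type*} [NormedAddCommGroup E]
    [InnerProductSpace ℝ E] (F : E → E) {xstar x z : E} (hsol : 0 ≤ ⟪F xstar, z - xstar⟫) :
    ⟪F x, x - z⟫ ≤ ‖F x‖ * ‖x - xstar‖ + ‖F x - F xstar‖ * ‖xstar - z‖ :=
  calc ⟪F x, x - z⟫
      = ⟪F x, x - xstar⟫ + ⟪F x - F xstar, xstar - z⟫ - ⟪F xstar, z - xstar⟫ := by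
        simp only [inner_sub_left, inner_sub_right]; ring
    _ ≤ ‖F x‖ * ‖x - xstar‖ + ‖F x - F xstar‖ * ‖xstar - z‖ - 0 := by
        gcongr <;> exact real_inner_le_norm _ _
    _ = ‖F x‖ * ‖x - xstar‖ + ‖F x - F xstar‖ * ‖xstar - z‖ := sub_zero _

theorem stmt_2_general {n : ℕ} (𝒞 : Set (EuclideanSpace ℝ (Fin n)))
    (F : EuclideanSpace ℝ (Fin n) → EuclideanSpace ℝ (Fin n))
    (xstar : EuclideanSpace ℝ (Fin n)) (hxstar : xstar ∈ 𝒞)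
    (hsol : ∀ z ∈ 𝒞, 0 ≤ ⟪F xstar, z - xstar⟫)
    (x : EuclideanSpace ℝ (Fin n)) (L M D : ℝ)
    (hD : 0 ≤ D)
    (hLip : ‖F x - F xstar‖ ≤ L * ‖x - xstar‖)
    (hFx : ‖F x‖ ≤ M)
    (hdiam : ∀ z ∈ 𝒞, ‖xstar - z‖ ≤ D) :
    (∀ z ∈ 𝒞, ⟪F x, x - z⟫ ≤ (D * L + M) * ‖x - xstar‖) ∧
      sSup ((fun z => ⟪F x, x - z⟫) '' 𝒞) ≤ (D * L + M) * ‖x - xstar‖ := by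
  have hbound : ∀ z ∈ 𝒞, ⟪F x, x - z⟫ ≤ (D * L + M) * ‖x - xstar‖ := fun z hz =>
    calc ⟪F x, x - z⟫
        ≤ ‖F x‖ * ‖x - xstar‖ + ‖F x - F xstar‖ * ‖xstar - z‖ :=
          inner_sub_le_of_inner_sub_nonneg F (hsol z hz)
      _ ≤ M * ‖x - xstar‖ + L * ‖x - xstar‖ * D :=
          add_le_add (by gcongr) (mul_le_mul_of_nonneg hLip (hdiam z hz) (norm_nonneg _) hD)
      _ = (D * L + M) * ‖x - xstar‖ := by ring
  exact ⟨hbound,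
    csSup_le (Set.Nonempty.image _ ⟨xstar, hxstar⟩) (Set.forall_mem_image.2 hbound)⟩

/-- Upper bound for the gap function: if `x*` solves `VI(𝒞, F)`,
`‖F x − F x*‖ ≤ L‖x − x*‖`, `‖F x‖ ≤ M`, and `‖x* − z‖ ≤ D` for all `z ∈ 𝒞`, then
`⟪F x, x − z⟫ ≤ (DL + M)‖x − x*‖` for all `z ∈ 𝒞`, and hence the gap function
`𝒢(x, 𝒞) = sup_{z ∈ 𝒞} ⟪F x, x − z⟫` is bounded by `(DL + M)‖x − x*‖`. -/
theorem stmt_2 {n : ℕ} (𝒞 : Set (EuclideanSpace ℝ (Fin n)))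
    (F : EuclideanSpace ℝ (Fin n) → EuclideanSpace ℝ (Fin n))
    (xstar : EuclideanSpace ℝ (Fin n)) (hxstar : xstar ∈ 𝒞)
    (hsol : ∀ z ∈ 𝒞, 0 ≤ ⟪F xstar, z - xstar⟫)
    (x : EuclideanSpace ℝ (Fin n)) (L M D : ℝ)
    (hL : 0 ≤ L) (hM : 0 ≤ M) (hD : 0 ≤ D)
    (hLip : ‖F x - F xstar‖ ≤ L * ‖x - xstar‖)
    (hFx : ‖F x‖ ≤ M)
    (hdiam : ∀ z ∈ 𝒞, ‖xstar - z‖ ≤ D) :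
    (∀ z ∈ 𝒞, ⟪F x, x - z⟫ ≤ (D * L + M) * ‖x - xstar‖) ∧
      sSup ((fun z => ⟪F x, x - z⟫) '' 𝒞) ≤ (D * L + M) * ‖x - xstar‖ :=
  stmt_2_general 𝒞 F xstar hxstar hsol x L M D hD hLip hFx hdiam
end

section
/- In the ADMM context, fix points x_{k+1}, y_k, y_{k+1}, λ_k, λ_{k+1} ∈ E and a KKT point (x^μ, λ^μ) with y^μ = x^μ. Assume λ_{k+1} = λ_k + β(x_{k+1} − y_{k+1}), that g(z) ≥ g(y_k) + ⟪λ_k, z − y_k⟫ for all z, and that g(z) ≥ g(y_{k+1}) + ⟪λ_{k+1}, z − y_{k+1}⟫ for all z. Then ⟪−λ_k − β(x_{k+1} − y_k), x_{k+1} − x^μ⟫ + ⟪λ_{k+1}, y_{k+1} − y^μ⟫ + ⟪λ^μ, x_{k+1} − y_{k+1}⟫ ≤ (1/(2β))‖λ_k − λ^μ‖² − (1/(2β))‖λ_{k+1} − λ^μ‖² + (β/2)‖y^μ − y_k‖² − (β/2)‖y^μ − y_{k+1}‖² − (1/(2β))‖λ_{k+1} − λ_k‖² − (β/2)‖y_k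 − y_{k+1}‖². -/
open scoped RealInnerProductSpace

/-- The affine constraint set `C_= = {x | C x = d}`. -/
def CeqSet {n p : ℕ} (C : Matrix (Fin p) (Fin n) ℝ) (d : EuclideanSpace ℝ (Fin p)) :
    Set (EuclideanSpace ℝ (Fin n)) :=
  {x | Matrix.toEuclideanLin C x = d}

/-- `F` is monotone on the set `S`. -/
def MonotoneOnSet {n : ℕ} (F : EuclideanSpace ℝ (Fin n) → EuclideanSpace ℝ (Fin n))
    (S : Set (EuclideanSpace ℝ (Fin n))) : Prop :=
  ∀ x ∈ S, ∀ x' ∈ S, 0 ≤ ⟪F x - F x', x - x'⟫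

/-- A KKT point `(x^μ, λ^μ)`: `x^μ ∈ C_=`, `⟪F x^μ + λ^μ, z − x^μ⟫ ≥ 0` for all `z ∈ C_=`,
and `λ^μ` is a subgradient of `g` at `x^μ`. -/
def IsKKTPoint {n : ℕ} (F : EuclideanSpace ℝ (Fin n) → EuclideanSpace ℝ (Fin n))
    (g : EuclideanSpace ℝ (Fin n) → ℝ) (S : Set (EuclideanSpace ℝ (Fin n)))
    (xμ lamμ : EuclideanSpace ℝ (Fin n)) : Prop :=
  xμ ∈ S ∧ (∀ z ∈ S, 0 ≤ ⟪F xμ + lamμ, z - xμ⟫) ∧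
    (∀ z, g xμ + ⟪lamμ, z - xμ⟫ ≤ g z)

/-- An ADMM step from `(y_k, λ_k)` to `(x_{k+1}, y_{k+1}, λ_{k+1})`. -/
def IsADMMStep {n : ℕ} (F : EuclideanSpace ℝ (Fin n) → EuclideanSpace ℝ (Fin n))
    (g : EuclideanSpace ℝ (Fin n) → ℝ) (β : ℝ) (S : Set (EuclideanSpace ℝ (Fin n)))
    (yk lamk xk1 yk1 lamk1 : EuclideanSpace ℝ (Fin n)) : Prop :=
  xk1 ∈ S ∧
  (∀ z ∈ S, 0 ≤ ⟪F xk1 + lamk + β • (xk1 - yk), z - xk1⟫) ∧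
  (∀ z, g yk1 + ⟪lamk1, z - yk1⟫ ≤ g z) ∧
  lamk1 = lamk + β • (xk1 - yk1)

/-- An ADMM trajectory: sequences `x, y, λ` whose consecutive entries are related by ADMM
steps, with the subgradient property at the initial point `y_0`. -/
def IsADMMTraj {n : ℕ} (F : EuclideanSpace ℝ (Fin n) → EuclideanSpace ℝ (Fin n))
    (g : EuclideanSpace ℝ (Fin n) → ℝ) (β : ℝ) (S : Set (EuclideanSpace ℝ (Fin n)))
    (x y lam : ℕ → EuclideanSpace ℝ (Fin n)) : Prop :=
  (∀ k, IsADMMStep F g β S (y k) (lam k) (x (k+1)) (y (k+1)) (lam (k+1))) ∧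
  (∀ z, g (y 0) + ⟪lam 0, z - y 0⟫ ≤ g z)

/-! The proof is pure algebra around one inequality. The update `λ_{k+1} = λ_k + β (x_{k+1} - y_{k+1})`
rewrites the left-hand side as `⟪λ^μ - λ_{k+1}, x_{k+1} - y_{k+1}⟫ + β ⟪y^μ - y_{k+1}, y_{k+1} - y_k⟫`
minus `⟪λ_{k+1} - λ_k, y_{k+1} - y_k⟫`; the last term is nonnegative because subgradients of `g`
form a monotone relation, and the first two turn into the differences of squared norms on the right
by the three-point identity, once `x_{k+1} - y_{k+1} = β⁻¹ (λ_{k+1} - λ_k)` is substituted. -/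

section InnerProductSpace

variable {E : Type*} [NormedAddCommGroup E] [InnerProductSpace ℝ E]

theorem two_mul_inner_sub_sub_eq (a b c : E) :
    2 * ⟪a - b, b - c⟫ = ‖a - c‖ ^ 2 - ‖a - b‖ ^ 2 - ‖b - c‖ ^ 2 := by
  have h := norm_add_sq_real (a - b) (b - c)
  rw [sub_add_sub_cancel] at h
  linarith

theorem inner_sub_sub_nonneg_of_subgradient {g : E → ℝ} {y y' u u' : E}
    (hu : ∀ z, g y + ⟪u, z - y⟫ ≤ g z) (hu' : ∀ z, g y' + ⟪u', z - y'⟫ ≤ g z) :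
    0 ≤ ⟪u - u', y - y'⟫ := by
  have h := hu y'
  have h' := hu' y
  rw [← neg_sub y y', inner_neg_right] at h
  rw [inner_sub_left]
  linarith

theorem admm_inner_eq {β : ℝ} {xk1 yk yk1 lamk lamk1 : E} (yμ lamμ : E)
    (hlam : lamk1 = lamk + β • (xk1 - yk1)) :
    ⟪-lamk - β • (xk1 - yk), xk1 - yμ⟫ + ⟪lamk1, yk1 - yμ⟫ + ⟪lamμ, xk1 - yk1⟫ =
      ⟪lamμ - lamk1, xk1 - yk1⟫ + β * ⟪yμ - yk1, yk1 - yk⟫ - ⟪lamk1 - lamk, yk1 - yk⟫ := by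
  subst hlam
  simp only [inner_sub_left, inner_sub_right, inner_add_left, inner_neg_left,
    real_inner_smul_left]
  linear_combination (-β) * real_inner_comm yk xk1 + (-β) * real_inner_comm yk1 yμ
    + (-β) * real_inner_comm xk1 yk1 + (-β) * real_inner_comm yμ yk

end InnerProductSpace

theorem stmt_5_general {n : ℕ}
    (g : EuclideanSpace ℝ (Fin n) → ℝ) (β : ℝ) (hβ : 0 < β)
    (xk1 yk yk1 lamk lamk1 xμ yμ lamμ : EuclideanSpace ℝ (Fin n))
    (hyμ : yμ = xμ)
    (hlam : lamk1 = lamk + β • (xk1 - yk1))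
    (hgk : ∀ z, g yk + ⟪lamk, z - yk⟫ ≤ g z)
    (hgk1 : ∀ z, g yk1 + ⟪lamk1, z - yk1⟫ ≤ g z) :
    ⟪-lamk - β • (xk1 - yk), xk1 - xμ⟫ + ⟪lamk1, yk1 - yμ⟫ + ⟪lamμ, xk1 - yk1⟫ ≤
      (1 / (2 * β)) * ‖lamk - lamμ‖ ^ 2 - (1 / (2 * β)) * ‖lamk1 - lamμ‖ ^ 2
      + (β / 2) * ‖yμ - yk‖ ^ 2 - (β / 2) * ‖yμ - yk1‖ ^ 2
      - (1 / (2 * β)) * ‖lamk1 - lamk‖ ^ 2 - (β / 2) * ‖yk - yk1‖ ^ 2 := by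
  subst hyμ
  have hmono := inner_sub_sub_nonneg_of_subgradient hgk1 hgk
  have hstep : xk1 - yk1 = β⁻¹ • (lamk1 - lamk) := by
    rw [hlam, add_sub_cancel_left, inv_smul_smul₀ hβ.ne']
  have hdual : ⟪lamμ - lamk1, xk1 - yk1⟫ = (1 / (2 * β)) *
      (‖lamk - lamμ‖ ^ 2 - ‖lamk1 - lamμ‖ ^ 2 - ‖lamk1 - lamk‖ ^ 2) := by
    rw [hstep, real_inner_smul_right, norm_sub_rev lamk, norm_sub_rev lamk1 lamμ,
      ← two_mul_inner_sub_sub_eq]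
    field_simp
  have hprimal : β * ⟪yμ - yk1, yk1 - yk⟫ =
      (β / 2) * (‖yμ - yk‖ ^ 2 - ‖yμ - yk1‖ ^ 2 - ‖yk - yk1‖ ^ 2) := by
    rw [norm_sub_rev yk, ← two_mul_inner_sub_sub_eq]
    ring
  rw [admm_inner_eq _ lamμ hlam, hdual, hprimal]
  linarith

/-- Lemma 3.5 of the paper. -/
theorem stmt_5 {n p : ℕ} (C : Matrix (Fin p) (Fin n) ℝ) (d : EuclideanSpace ℝ (Fin p))
    (F : EuclideanSpace ℝ (Fin n) → EuclideanSpace ℝ (Fin n))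
    (g : EuclideanSpace ℝ (Fin n) → ℝ) (β : ℝ) (hβ : 0 < β)
    (xk1 yk yk1 lamk lamk1 xμ yμ lamμ : EuclideanSpace ℝ (Fin n))
    (hKKT : IsKKTPoint F g (CeqSet C d) xμ lamμ) (hyμ : yμ = xμ)
    (hlam : lamk1 = lamk + β • (xk1 - yk1))
    (hgk : ∀ z, g yk + ⟪lamk, z - yk⟫ ≤ g z)
    (hgk1 : ∀ z, g yk1 + ⟪lamk1, z - yk1⟫ ≤ g z) :
    ⟪-lamk - β • (xk1 - yk), xk1 - xμ⟫ + ⟪lamk1, yk1 - yμ⟫ + ⟪lamμ, xk1 - yk1⟫ ≤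
      (1 / (2 * β)) * ‖lamk - lamμ‖ ^ 2 - (1 / (2 * β)) * ‖lamk1 - lamμ‖ ^ 2
      + (β / 2) * ‖yμ - yk‖ ^ 2 - (β / 2) * ‖yμ - yk1‖ ^ 2
      - (1 / (2 * β)) * ‖lamk1 - lamk‖ ^ 2 - (β / 2) * ‖yk - yk1‖ ^ 2 :=
  stmt_5_general g β hβ xk1 yk yk1 lamk lamk1 xμ yμ lamμ hyμ hlam hgk hgk1
end

section
/- In the ADMM context, suppose F is monotone on C_=, let (x^μ, λ^μ) be a KKT point with y^μ = x^μ, and let (x_{k+1}, y_k, y_{k+1}, λ_k, λ_{k+1}) be an ADMM step from (y_k, λ_k), where additionally g(z) ≥ g(y_k) + ⟪λ_k, z − y_k⟫ for all z. Then ⟪F x^μ, x_{k+1} − x^μ⟫ + g(y_{k+1}) − g(y^μ) + ⟪λ^μ, x_{k+1} − y_{k+1}⟫ ≤ (1/(2β))‖λ_k − λ^μ‖² − (1/(2β))‖λ_{k+1} − λ^μ‖² + (β/2)‖y_k − y^μ‖² − (β/2)‖y_{k+1} − y^μ‖² − (1/(2β))‖λ_{k+1} − λ_k‖² − (β/2)‖y_{k+1}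 − y_k‖². -/
/-!
Three inequalities are summed: monotonicity of `F` combined with the `x`-step tested at `x^μ`,
the subgradient inequality of the `y`-step tested at `y^μ = x^μ`, and monotonicity of `∂g`
applied to `λ_k ∈ ∂g(y_k)` and `λ_{k+1} ∈ ∂g(y_{k+1})`. Since `λ_{k+1} − λ_k = β (x_{k+1} − y_{k+1})`,
the sum of their right-hand sides collapses to `−⟪λ_{k+1} − λ^μ, λ_{k+1} − λ_k⟫ / β
− β ⟪y_{k+1} − y_k, y_{k+1} − y^μ⟫`, and the three-point identity
`2 ⟪a − b, a − c⟫ = ‖a − b‖² + ‖a − c‖² − ‖b − c‖²` turns both inner products into the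
telescoping squared norms.
-/

open scoped RealInnerProductSpace

section InnerProductSpace

variable {E : Type*} [NormedAddCommGroup E] [InnerProductSpace ℝ E]

theorem two_mul_inner_sub_sub (a b c : E) :
    2 * ⟪a - b, a - c⟫ = ‖a - b‖ ^ 2 + ‖a - c‖ ^ 2 - ‖b - c‖ ^ 2 := by
  rw [show b - c = (a - c) - (a - b) by abel, norm_sub_sq_real (a - c), real_inner_comm]
  ring

theorem sub_le_inner_of_subgradient {g : E → ℝ} {y u : E} (h : ∀ z, g y + ⟪u, z - y⟫ ≤ g z)
    (x : E) : g y - g x ≤ ⟪u, y - x⟫ := by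
  have hx := h x
  rw [← neg_sub y x, inner_neg_right] at hx
  linarith

theorem inner_sub_nonneg_of_subgradient {g : E → ℝ} {y y' u u' : E}
    (h : ∀ z, g y + ⟪u, z - y⟫ ≤ g z) (h' : ∀ z, g y' + ⟪u', z - y'⟫ ≤ g z) :
    0 ≤ ⟪u' - u, y' - y⟫ := by
  have h₁ := h y'
  have h₂ := sub_le_inner_of_subgradient h' y
  rw [inner_sub_left]
  linarith

variable {β : ℝ} {x₁ y y₁ lam lam₁ lamμ xμ : E}

theorem admm_inner_sum_eq (hlam : lam₁ = lam + β • (x₁ - y₁)) :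
    ⟪lam + β • (x₁ - y), xμ - x₁⟫ + ⟪lam₁, y₁ - xμ⟫ + ⟪lamμ, x₁ - y₁⟫ + ⟪lam₁ - lam, y₁ - y⟫
      = -⟪lam₁ - lamμ, x₁ - y₁⟫ - β * ⟪y₁ - y, y₁ - xμ⟫ := by
  subst hlam
  simp only [inner_add_left, inner_sub_left, inner_sub_right, inner_smul_left,
    RCLike.conj_to_real, add_sub_cancel_left]
  rw [real_inner_comm y x₁, real_inner_comm y₁ x₁, real_inner_comm y y₁, real_inner_comm xμ x₁,
    real_inner_comm xμ y₁, real_inner_comm xμ y]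
  ring

theorem admm_inner_sum_eq_telescoping (hβ : β ≠ 0) (hlam : lam₁ = lam + β • (x₁ - y₁)) :
    ⟪lam + β • (x₁ - y), xμ - x₁⟫ + ⟪lam₁, y₁ - xμ⟫ + ⟪lamμ, x₁ - y₁⟫ + ⟪lam₁ - lam, y₁ - y⟫
      = 1 / (2 * β) * ‖lam - lamμ‖ ^ 2 - 1 / (2 * β) * ‖lam₁ - lamμ‖ ^ 2
      + β / 2 * ‖y - xμ‖ ^ 2 - β / 2 * ‖y₁ - xμ‖ ^ 2
      - 1 / (2 * β) * ‖lam₁ - lam‖ ^ 2 - β / 2 * ‖y₁ - y‖ ^ 2 := by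
  have hdiff : x₁ - y₁ = β⁻¹ • (lam₁ - lam) := by
    rw [hlam, add_sub_cancel_left, inv_smul_smul₀ hβ]
  have hlam₁ := two_mul_inner_sub_sub lam₁ lamμ lam
  have hy₁ := two_mul_inner_sub_sub y₁ y xμ
  rw [norm_sub_rev lamμ lam] at hlam₁
  rw [admm_inner_sum_eq hlam, hdiff, inner_smul_right]
  field_simp
  linear_combination -hlam₁ - β ^ 2 * hy₁

end InnerProductSpace

theorem MonotoneOnSet.inner_le_of_variationalInequality {n : ℕ}
    {F : EuclideanSpace ℝ (Fin n) → EuclideanSpace ℝ (Fin n)} {S : Set (EuclideanSpace ℝ (Fin n))}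
    (hF : MonotoneOnSet F S) {x x₁ u : EuclideanSpace ℝ (Fin n)} (hx : x ∈ S) (hx₁ : x₁ ∈ S)
    (hvi : ∀ z ∈ S, 0 ≤ ⟪F x₁ + u, z - x₁⟫) :
    ⟪F x, x₁ - x⟫ ≤ ⟪u, x - x₁⟫ := by
  have hmono := hF x₁ hx₁ x hx
  have hvix := hvi x hx
  rw [inner_add_left, ← neg_sub x₁ x, inner_neg_right, inner_neg_right] at hvix
  rw [inner_sub_left] at hmono
  rw [← neg_sub x₁ x, inner_neg_right]
  linarith

/-- Lemma 3.6, first inequality. -/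
theorem stmt_6 {n p : ℕ} (C : Matrix (Fin p) (Fin n) ℝ) (d : EuclideanSpace ℝ (Fin p))
    (F : EuclideanSpace ℝ (Fin n) → EuclideanSpace ℝ (Fin n))
    (g : EuclideanSpace ℝ (Fin n) → ℝ) (β : ℝ) (hβ : 0 < β)
    (hF : MonotoneOnSet F (CeqSet C d))
    (xk1 yk yk1 lamk lamk1 xμ yμ lamμ : EuclideanSpace ℝ (Fin n))
    (hKKT : IsKKTPoint F g (CeqSet C d) xμ lamμ) (hyμ : yμ = xμ)
    (hstep : IsADMMStep F g β (CeqSet C d) yk lamk xk1 yk1 lamk1)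
    (hgk : ∀ z, g yk + ⟪lamk, z - yk⟫ ≤ g z) :
    ⟪F xμ, xk1 - xμ⟫ + g yk1 - g yμ + ⟪lamμ, xk1 - yk1⟫ ≤
      (1 / (2 * β)) * ‖lamk - lamμ‖ ^ 2 - (1 / (2 * β)) * ‖lamk1 - lamμ‖ ^ 2
      + (β / 2) * ‖yk - yμ‖ ^ 2 - (β / 2) * ‖yk1 - yμ‖ ^ 2
      - (1 / (2 * β)) * ‖lamk1 - lamk‖ ^ 2 - (β / 2) * ‖yk1 - yk‖ ^ 2 := by
  obtain ⟨hxμ, -, -⟩ := hKKT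
  obtain ⟨hxk1, hxstep, hystep, hlam⟩ := hstep
  subst hyμ
  have hF_step := hF.inner_le_of_variationalInequality hxμ hxk1
    (u := lamk + β • (xk1 - yk)) (by simpa only [add_assoc] using hxstep)
  have hg_step := sub_le_inner_of_subgradient hystep yμ
  have hsub_mono := inner_sub_nonneg_of_subgradient hgk hystep
  linarith [admm_inner_sum_eq_telescoping hβ.ne' (lamμ := lamμ) (xμ := yμ) (y := yk) hlam]
end

section
/- In the ADMM context, suppose F is monotone on C_=, let (x^μ, λ^μ) be a KKT point with y^μ = x^μ, and let (x_{k+1}, y_k, y_{k+1}, λ_k, λ_{k+1}) be an ADMM step from (y_k, λ_k), where additionally g(z) ≥ g(y_k) + ⟪λ_k, z − y_k⟫ for all z. Then the Lyapunov decrease inequality holds: (1/(2β))‖λ_{k+1} − λ_k‖² + (β/2)‖y_{k+1} − y_k‖² ≤ (1/(2β))‖λ_k − λ^μ‖² − (1/(2β))‖λ_{k+1} − λ^μ‖² + (β/2)‖y_k − y^μ‖² − (β/2)‖y_{k+1} − y^μ‖². -/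
/-!
Adding the x-step variational inequality tested at `x^μ`, the KKT variational inequality tested
at `x_{k+1}` and monotonicity of `F` cancels the `F`-terms. Adding further the monotonicity of
`∂g` at the pairs `(y_{k+1}, λ_{k+1}), (y^μ, λ^μ)` and `(y_k, λ_k), (y_{k+1}, λ_{k+1})` leaves
`0 ≤ ⟪y_{k+1} - x_{k+1}, λ_{k+1} - λ^μ⟫ + β ⟪y_k - y_{k+1}, y_{k+1} - y^μ⟫`. As
`λ_k - λ_{k+1} = β (y_{k+1} - x_{k+1})`, the identity
`‖a - c‖² - ‖b - c‖² - ‖a - b‖² = 2 ⟪a - b, b - c⟫` shows that this right-hand side is exactly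
the gap in the Lyapunov inequality.
-/

open scoped RealInnerProductSpace

section InnerProductSpace

variable {E : Type*} [NormedAddCommGroup E] [InnerProductSpace ℝ E]

theorem norm_sub_sq_sub_norm_sub_sq_sub_norm_sub_sq (a b c : E) :
    ‖a - c‖ ^ 2 - ‖b - c‖ ^ 2 - ‖a - b‖ ^ 2 = 2 * ⟪a - b, b - c⟫ := by
  rw [← sub_add_sub_cancel a b c, norm_add_sq_real]
  ring

theorem inner_sub_nonneg_of_subgradient_s8 {g : E → ℝ} {x y u v : E}
    (hu : ∀ z, g x + ⟪u, z - x⟫ ≤ g z) (hv : ∀ z, g y + ⟪v, z - y⟫ ≤ g z) :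
    0 ≤ ⟪u - v, x - y⟫ := by
  have hxy := hu y
  have hyx := hv x
  rw [← neg_sub x y, inner_neg_right] at hxy
  rw [inner_sub_left]
  linarith

theorem lyapunov_gap_eq {β : ℝ} (hβ : β ≠ 0) {xk1 yk yk1 lamk lamk1 yμ lamμ : E}
    (hlam : lamk1 = lamk + β • (xk1 - yk1)) :
    (1 / (2 * β)) * ‖lamk - lamμ‖ ^ 2 - (1 / (2 * β)) * ‖lamk1 - lamμ‖ ^ 2
      + (β / 2) * ‖yk - yμ‖ ^ 2 - (β / 2) * ‖yk1 - yμ‖ ^ 2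
      - ((1 / (2 * β)) * ‖lamk1 - lamk‖ ^ 2 + (β / 2) * ‖yk1 - yk‖ ^ 2)
      = ⟪yk1 - xk1, lamk1 - lamμ⟫ + β * ⟪yk - yk1, yk1 - yμ⟫ := by
  have hdual : lamk - lamk1 = β • (yk1 - xk1) := by rw [hlam]; module
  have hlam_sq := norm_sub_sq_sub_norm_sub_sq_sub_norm_sub_sq lamk lamk1 lamμ
  have hy_sq := norm_sub_sq_sub_norm_sub_sq_sub_norm_sub_sq yk yk1 yμ
  rw [hdual, real_inner_smul_left, ← hdual] at hlam_sq
  rw [norm_sub_rev lamk1 lamk, norm_sub_rev yk1 yk]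
  field_simp
  linear_combination hlam_sq + β ^ 2 * hy_sq

end InnerProductSpace

theorem IsADMMStep.inner_nonneg {n : ℕ} {F : EuclideanSpace ℝ (Fin n) → EuclideanSpace ℝ (Fin n)}
    {g : EuclideanSpace ℝ (Fin n) → ℝ} {β : ℝ} {S : Set (EuclideanSpace ℝ (Fin n))}
    {xk1 yk yk1 lamk lamk1 xμ lamμ : EuclideanSpace ℝ (Fin n)}
    (hF : MonotoneOnSet F S) (hKKT : IsKKTPoint F g S xμ lamμ)
    (hstep : IsADMMStep F g β S yk lamk xk1 yk1 lamk1)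
    (hgk : ∀ z, g yk + ⟪lamk, z - yk⟫ ≤ g z) :
    0 ≤ ⟪yk1 - xk1, lamk1 - lamμ⟫ + β * ⟪yk - yk1, yk1 - xμ⟫ := by
  obtain ⟨hxμS, hVIμ, hsubμ⟩ := hKKT
  obtain ⟨hx1S, hVI, hsub1, hlam⟩ := hstep
  have hVI_sum : 0 ≤ ⟪lamk + β • (xk1 - yk) - lamμ, xμ - xk1⟫ := by
    have hVI_at_xμ := hVI xμ hxμS
    have hVIμ_at_x1 := hVIμ xk1 hx1S
    have hF_mono := hF xk1 hx1S xμ hxμS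
    simp only [inner_add_left, inner_sub_left, inner_sub_right, real_inner_comm]
      at hVI_at_xμ hVIμ_at_x1 hF_mono ⊢
    linarith
  have hg_mono_μ := inner_sub_nonneg_of_subgradient_s8 hsub1 hsubμ
  have hg_mono_k := inner_sub_nonneg_of_subgradient_s8 hgk hsub1
  rw [hlam] at hg_mono_μ hg_mono_k ⊢
  simp only [inner_add_left, inner_add_right, inner_sub_left, inner_sub_right,
    real_inner_smul_right, real_inner_comm] at hVI_sum hg_mono_μ hg_mono_k ⊢
  linarith

/-- Lyapunov decrease inequality, Eq. (3.19). -/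
theorem stmt_8 {n p : ℕ} (C : Matrix (Fin p) (Fin n) ℝ) (d : EuclideanSpace ℝ (Fin p))
    (F : EuclideanSpace ℝ (Fin n) → EuclideanSpace ℝ (Fin n))
    (g : EuclideanSpace ℝ (Fin n) → ℝ) (β : ℝ) (hβ : 0 < β)
    (hF : MonotoneOnSet F (CeqSet C d))
    (xk1 yk yk1 lamk lamk1 xμ yμ lamμ : EuclideanSpace ℝ (Fin n))
    (hKKT : IsKKTPoint F g (CeqSet C d) xμ lamμ) (hyμ : yμ = xμ)
    (hstep : IsADMMStep F g β (CeqSet C d) yk lamk xk1 yk1 lamk1)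
    (hgk : ∀ z, g yk + ⟪lamk, z - yk⟫ ≤ g z) :
    (1 / (2 * β)) * ‖lamk1 - lamk‖ ^ 2 + (β / 2) * ‖yk1 - yk‖ ^ 2 ≤
      (1 / (2 * β)) * ‖lamk - lamμ‖ ^ 2 - (1 / (2 * β)) * ‖lamk1 - lamμ‖ ^ 2
      + (β / 2) * ‖yk - yμ‖ ^ 2 - (β / 2) * ‖yk1 - yμ‖ ^ 2 := by
  subst hyμ
  rw [← sub_nonneg, lyapunov_gap_eq hβ.ne' hstep.2.2.2]
  exact hstep.inner_nonneg hF hKKT hgk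
end

section
/- In the ADMM context, suppose F is monotone on C_=, and let there be two consecutive ADMM steps: one from (y_{k−1}, λ_{k−1}) to (x_k, y_k, λ_k) and one from (y_k, λ_k) to (x_{k+1}, y_{k+1}, λ_{k+1}). Then the successive residuals are nonincreasing: (1/(2β))‖λ_{k+1} − λ_k‖² + (β/2)‖y_{k+1} − y_k‖² ≤ (1/(2β))‖λ_k − λ_{k−1}‖² + (β/2)‖y_k − y_{k−1}‖². -/
open scoped RealInnerProductSpace

/-!
Both residuals are read off the sum `a = (λ_{k+1} - λ_k) + β (y_{k+1} - y_k)`. Monotonicity of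
the subdifferential of `g` makes the two summands of `a` form a nonnegative inner product, so
`‖λ_{k+1} - λ_k‖² + β²‖y_{k+1} - y_k‖² ≤ ‖a‖²`. Adding the variational inequalities of the two
`x`-steps (each tested at the other iterate) and using monotonicity of `F` gives
`⟪a - β (y_k - y_{k-1}), λ_k - λ_{k-1} - a⟫ ≥ 0`, and this bounds `‖a‖²` by the previous residual.
-/

section InnerProduct

variable {E : Type*} [NormedAddCommGroup E] [InnerProductSpace ℝ E]

theorem norm_sq_add_norm_sq_le_norm_add_sq {u r : E} (h : 0 ≤ ⟪u, r⟫) :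
    ‖u‖ ^ 2 + ‖r‖ ^ 2 ≤ ‖u + r‖ ^ 2 := by
  rw [norm_add_sq_real]
  linarith

/-- The key identity is `‖v‖² + ‖w‖² = ‖a‖² + ‖v + w - a‖² + 2 ⟪a - w, v - a⟫`. -/
theorem norm_sq_le_norm_sq_add_norm_sq_of_inner_nonneg {a v w : E} (h : 0 ≤ ⟪a - w, v - a⟫) :
    ‖a‖ ^ 2 ≤ ‖v‖ ^ 2 + ‖w‖ ^ 2 := by
  have hsq : 0 ≤ ‖v + w - a‖ ^ 2 := sq_nonneg _
  rw [norm_sub_sq_real, norm_add_sq_real] at hsq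
  simp only [inner_sub_left, inner_sub_right, inner_add_left] at h hsq
  linarith [real_inner_comm a v, real_inner_comm v w, real_inner_self_eq_norm_sq a]

theorem inner_sub_sub_nonneg_of_subgradient_s9 {g : E → ℝ} {y y' l l' : E}
    (hl : ∀ z, g y + ⟪l, z - y⟫ ≤ g z) (hl' : ∀ z, g y' + ⟪l', z - y'⟫ ≤ g z) :
    0 ≤ ⟪l - l', y - y'⟫ := by
  have h := hl y'
  have h' := hl' y
  rw [← neg_sub y y', inner_neg_right] at h
  rw [inner_sub_left]
  linarith

theorem inner_sub_sub_nonneg_of_variationalIneq {F : E → E} {S : Set E}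
    (hF : ∀ x ∈ S, ∀ x' ∈ S, 0 ≤ ⟪F x - F x', x - x'⟫) {x x' c c' : E} (hx : x ∈ S)
    (hx' : x' ∈ S) (hc : ∀ z ∈ S, 0 ≤ ⟪F x + c, z - x⟫) (hc' : ∀ z ∈ S, 0 ≤ ⟪F x' + c', z - x'⟫) :
    0 ≤ ⟪c - c', x' - x⟫ := by
  have h := hc x' hx'
  have h' := hc' x hx
  have hmono := hF x hx x' hx'
  rw [← neg_sub x' x, inner_neg_right] at h' hmono
  simp only [inner_add_left, inner_sub_left] at h h' hmono ⊢
  linarith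

end InnerProduct

section ADMM

variable {n : ℕ} {F : EuclideanSpace ℝ (Fin n) → EuclideanSpace ℝ (Fin n)}
  {g : EuclideanSpace ℝ (Fin n) → ℝ} {β : ℝ} {S : Set (EuclideanSpace ℝ (Fin n))}
  {y l x' y' l' : EuclideanSpace ℝ (Fin n)}

/-- The shift `λ_k + β (x_{k+1} - y_k)` in the `x`-step, rewritten through the dual step. -/
theorem IsADMMStep.variationalIneq (h : IsADMMStep F g β S y l x' y' l') :
    ∀ z ∈ S, 0 ≤ ⟪F x' + (l' + β • (y' - y)), z - x'⟫ := by
  obtain ⟨-, hvi, -, hl'⟩ := h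
  have hshift : l' + β • (y' - y) = l + β • (x' - y) := by
    rw [hl']
    module
  rw [hshift, ← add_assoc]
  exact hvi

theorem IsADMMStep.smul_eq_sub_add (h : IsADMMStep F g β S y l x' y' l') :
    β • x' = l' - l + β • y' := by
  rw [h.2.2.2]
  module

theorem IsADMMStep.norm_sq_add_norm_smul_sq_le (hβ : 0 ≤ β)
    (hF : ∀ x ∈ S, ∀ x' ∈ S, 0 ≤ ⟪F x - F x', x - x'⟫) {xk xk1 ykm1 yk yk1 lamkm1 lamk lamk1 :
      EuclideanSpace ℝ (Fin n)}
    (h₁ : IsADMMStep F g β S ykm1 lamkm1 xk yk lamk)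
    (h₂ : IsADMMStep F g β S yk lamk xk1 yk1 lamk1) :
    ‖lamk1 - lamk‖ ^ 2 + ‖β • (yk1 - yk)‖ ^ 2 ≤ ‖lamk - lamkm1‖ ^ 2 + ‖β • (yk - ykm1)‖ ^ 2 := by
  have hsub : 0 ≤ ⟪lamk1 - lamk, β • (yk1 - yk)⟫ := by
    rw [real_inner_smul_right]
    exact mul_nonneg hβ (inner_sub_sub_nonneg_of_subgradient_s9 h₂.2.2.1 h₁.2.2.1)
  have hvi : 0 ≤ ⟪lamk1 - lamk + β • (yk1 - yk) - β • (yk - ykm1),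
      lamk - lamkm1 - (lamk1 - lamk + β • (yk1 - yk))⟫ := by
    have hx : β • (xk - xk1) = lamk - lamkm1 - (lamk1 - lamk + β • (yk1 - yk)) := by
      rw [smul_sub β xk, h₁.smul_eq_sub_add, h₂.smul_eq_sub_add]
      module
    have hshift : lamk1 + β • (yk1 - yk) - (lamk + β • (yk - ykm1)) =
        lamk1 - lamk + β • (yk1 - yk) - β • (yk - ykm1) := by
      abel
    have hVI := inner_sub_sub_nonneg_of_variationalIneq hF h₂.1 h₁.1
      h₂.variationalIneq h₁.variationalIneq
    rw [hshift] at hVI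
    rw [← hx, real_inner_smul_right]
    exact mul_nonneg hβ hVI
  exact (norm_sq_add_norm_sq_le_norm_add_sq hsub).trans
    (norm_sq_le_norm_sq_add_norm_sq_of_inner_nonneg hvi)

end ADMM

/-- Lemma 3.7: successive residuals are nonincreasing. -/
theorem stmt_9 {n p : ℕ} (C : Matrix (Fin p) (Fin n) ℝ) (d : EuclideanSpace ℝ (Fin p))
    (F : EuclideanSpace ℝ (Fin n) → EuclideanSpace ℝ (Fin n))
    (g : EuclideanSpace ℝ (Fin n) → ℝ) (β : ℝ) (hβ : 0 < β)
    (hF : MonotoneOnSet F (CeqSet C d))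
    (xk xk1 ykm1 yk yk1 lamkm1 lamk lamk1 : EuclideanSpace ℝ (Fin n))
    (hstep₁ : IsADMMStep F g β (CeqSet C d) ykm1 lamkm1 xk yk lamk)
    (hstep₂ : IsADMMStep F g β (CeqSet C d) yk lamk xk1 yk1 lamk1) :
    (1 / (2 * β)) * ‖lamk1 - lamk‖ ^ 2 + (β / 2) * ‖yk1 - yk‖ ^ 2 ≤
      (1 / (2 * β)) * ‖lamk - lamkm1‖ ^ 2 + (β / 2) * ‖yk - ykm1‖ ^ 2 := by
  have key := IsADMMStep.norm_sq_add_norm_smul_sq_le hβ.le hF hstep₁ hstep₂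
  simp only [norm_smul, Real.norm_eq_abs, abs_of_pos hβ, mul_pow] at key
  have hscale : ∀ a b : ℝ, 1 / (2 * β) * a + β / 2 * b = 1 / (2 * β) * (a + β ^ 2 * b) := by
    intro a b
    field_simp
  rw [hscale, hscale]
  exact mul_le_mul_of_nonneg_left key (by positivity)
end

section
/- In the ADMM context, suppose F is monotone on C_=, let (x^μ, λ^μ) be a KKT point with y^μ = x^μ, and let (x_k)_{k≥1}, (y_k)_{k≥0}, (λ_k)_{k≥0} be an ADMM trajectory. Then, as k → ∞: (i) x_{k+1} − y_{k+1} → 0; (ii) ⟪F x^μ, x_{k+1} − x^μ⟫ + g(y_{k+1}) − g(y^μ) → 0; and (iii) ⟪F x_{k+1}, x_{k+1} − x^μ⟫ + g(y_{k+1}) − g(y^μ) → 0. -/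
/-!
Write `r_k = x_{k+1} - y_{k+1}` and `s_k = y_{k+1} - y_k`. The energy
`V_k = ‖λ_k - λ^μ‖² + β² ‖y_k - x^μ‖²` satisfies `V_{k+1} + β² (‖r_k‖² + ‖s_k‖²) ≤ V_k`:
this is the sum of the x-step and KKT variational inequalities, the monotonicity of `F`, and the
monotonicity of the subdifferential of `g` (between `y_{k+1}` and `x^μ`, and between `y_{k+1}` and
`y_k`). Hence `r_k → 0`, `s_k → 0`, and `λ_k`, `x_k` stay bounded. Both value gaps lie between
`⟪-r_k, λ^μ⟫` and `⟪-r_k, λ_{k+1}⟫ + β ⟪-s_k, x_{k+1} - x^μ⟫`, and these bounds tend to `0`.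
-/

open scoped RealInnerProductSpace

open Filter Topology

section Dissipation

variable {E : Type*} [NormedAddCommGroup E]

theorem tendsto_zero_of_norm_sq_dissipation {W : ℕ → ℝ} {u : ℕ → E} {c : ℝ} (hc : 0 < c)
    (hW : ∀ k, 0 ≤ W k) (hdesc : ∀ k, W (k + 1) + c * ‖u k‖ ^ 2 ≤ W k) :
    Tendsto u atTop (𝓝 0) := by
  have hanti : Antitone W := antitone_nat_of_succ_le fun k => by
    nlinarith [hdesc k, sq_nonneg ‖u k‖]
  have hW_lim := tendsto_atTop_ciInf hanti ⟨0, by rintro _ ⟨k, rfl⟩; exact hW k⟩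
  have hdrop : Tendsto (fun k => (W k - W (k + 1)) / c) atTop (𝓝 0) := by
    simpa using (hW_lim.sub (hW_lim.comp (tendsto_add_atTop_nat 1))).div_const c
  have hsq : Tendsto (fun k => ‖u k‖ ^ 2) atTop (𝓝 0) :=
    squeeze_zero (fun k => by positivity)
      (fun k => by rw [le_div_iff₀ hc]; linarith [hdesc k]) hdrop
  rw [tendsto_zero_iff_norm_tendsto_zero]
  simpa [Real.sqrt_sq (norm_nonneg _)] using hsq.sqrt

end Dissipation

section InnerProduct

variable {E : Type*} [NormedAddCommGroup E] [InnerProductSpace ℝ E]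

theorem inner_sub_sub_nonneg_of_subgradient_s10 {g : E → ℝ} {a b u v : E}
    (ha : ∀ z, g a + ⟪u, z - a⟫ ≤ g z) (hb : ∀ z, g b + ⟪v, z - b⟫ ≤ g z) :
    0 ≤ ⟪u - v, a - b⟫ := by
  have hab := ha b
  have hba := hb a
  rw [← neg_sub a b, inner_neg_right] at hab
  rw [inner_sub_left]
  linarith

theorem admm_energy_descent {β : ℝ} (hβ : 0 ≤ β) {lam lam' lamμ y x' y' xμ : E}
    (hdual : lam' = lam + β • (x' - y'))
    (hx : ⟪lam - lamμ + β • (x' - y), x' - xμ⟫ ≤ 0)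
    (hy : 0 ≤ ⟪lam' - lamμ, y' - xμ⟫)
    (hyy : 0 ≤ ⟪lam' - lam, y' - y⟫) :
    ‖lam' - lamμ‖ ^ 2 + β ^ 2 * ‖y' - xμ‖ ^ 2 + β ^ 2 * ‖x' - y'‖ ^ 2 + β ^ 2 * ‖y' - y‖ ^ 2
      ≤ ‖lam - lamμ‖ ^ 2 + β ^ 2 * ‖y - xμ‖ ^ 2 := by
  subst hdual
  -- right side minus left side is identically `2β` times `(-hx) + hy + hyy`
  simp only [← real_inner_self_eq_norm_sq]
  simp only [inner_sub_left, inner_sub_right, inner_add_left, inner_add_right,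
    real_inner_smul_right, real_inner_comm] at hx hy hyy ⊢
  nlinarith [mul_le_mul_of_nonneg_left hx (by positivity : (0:ℝ) ≤ 2 * β),
    mul_nonneg (by positivity : (0:ℝ) ≤ 2 * β) hy, mul_nonneg (by positivity : (0:ℝ) ≤ 2 * β) hyy]

end InnerProduct

section ADMM

variable {n : ℕ} {F : EuclideanSpace ℝ (Fin n) → EuclideanSpace ℝ (Fin n)}
  {g : EuclideanSpace ℝ (Fin n) → ℝ} {β : ℝ} {S : Set (EuclideanSpace ℝ (Fin n))}
  {x y lam : ℕ → EuclideanSpace ℝ (Fin n)} {xμ lamμ : EuclideanSpace ℝ (Fin n)}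

theorem MonotoneOnSet.inner_le_inner (hF : MonotoneOnSet F S) {u v : EuclideanSpace ℝ (Fin n)}
    (hu : u ∈ S) (hv : v ∈ S) : ⟪F v, u - v⟫ ≤ ⟪F u, u - v⟫ := by
  have := hF u hu v hv
  rw [inner_sub_left] at this
  linarith

theorem IsKKTPoint.inner_le_gap (hKKT : IsKKTPoint F g S xμ lamμ)
    {u v : EuclideanSpace ℝ (Fin n)} (hu : u ∈ S) :
    ⟪v - u, lamμ⟫ ≤ ⟪F xμ, u - xμ⟫ + g v - g xμ := by
  obtain ⟨-, hvi, hsub⟩ := hKKT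
  have h1 := hvi u hu
  have h2 := hsub v
  have hsplit : v - u = (v - xμ) - (u - xμ) := by abel
  rw [inner_add_left] at h1
  rw [hsplit, inner_sub_left, real_inner_comm, real_inner_comm lamμ]
  linarith

namespace IsADMMTraj

theorem subgradient (htraj : IsADMMTraj F g β S x y lam) :
    ∀ k z, g (y k) + ⟪lam k, z - y k⟫ ≤ g z
  | 0 => htraj.2
  | k + 1 => (htraj.1 k).2.2.1

theorem inner_sub_nonpos (htraj : IsADMMTraj F g β S x y lam) (hF : MonotoneOnSet F S)
    (hKKT : IsKKTPoint F g S xμ lamμ) (k : ℕ) :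
    ⟪lam k - lamμ + β • (x (k + 1) - y k), x (k + 1) - xμ⟫ ≤ 0 := by
  obtain ⟨hxS, hvi, -⟩ := htraj.1 k
  have hstep := hvi xμ hKKT.1
  have hμ := hKKT.2.1 (x (k + 1)) hxS
  have hmono := hF.inner_le_inner hxS hKKT.1
  rw [← neg_sub (x (k + 1)) xμ, inner_neg_right] at hstep
  simp only [inner_add_left, inner_sub_left] at hstep hμ ⊢
  linarith

theorem energy_descent (htraj : IsADMMTraj F g β S x y lam) (hβ : 0 ≤ β)
    (hF : MonotoneOnSet F S) (hKKT : IsKKTPoint F g S xμ lamμ) (k : ℕ) :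
    ‖lam (k + 1) - lamμ‖ ^ 2 + β ^ 2 * ‖y (k + 1) - xμ‖ ^ 2
      + β ^ 2 * ‖x (k + 1) - y (k + 1)‖ ^ 2 + β ^ 2 * ‖y (k + 1) - y k‖ ^ 2
      ≤ ‖lam k - lamμ‖ ^ 2 + β ^ 2 * ‖y k - xμ‖ ^ 2 :=
  admm_energy_descent hβ (htraj.1 k).2.2.2 (htraj.inner_sub_nonpos hF hKKT k)
    (inner_sub_sub_nonneg_of_subgradient_s10 (htraj.subgradient (k + 1)) hKKT.2.2)
    (inner_sub_sub_nonneg_of_subgradient_s10 (htraj.subgradient (k + 1)) (htraj.subgradient k))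

theorem gap_le (htraj : IsADMMTraj F g β S x y lam) (hxμ : xμ ∈ S) (k : ℕ) :
    ⟪F (x (k + 1)), x (k + 1) - xμ⟫ + g (y (k + 1)) - g xμ
      ≤ ⟪y (k + 1) - x (k + 1), lam (k + 1)⟫ + β * ⟪y k - y (k + 1), x (k + 1) - xμ⟫ := by
  obtain ⟨-, hvi, -, hdual⟩ := htraj.1 k
  have hstep := hvi xμ hxμ
  have hsub := htraj.subgradient (k + 1) xμ
  rw [hdual] at hsub ⊢
  rw [← neg_sub (x (k + 1)) xμ, inner_neg_right] at hstep
  simp only [inner_add_left, inner_add_right, inner_sub_left, inner_sub_right,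
    real_inner_smul_right, real_inner_comm] at hstep hsub ⊢
  linarith

theorem tendsto_primal_residual (htraj : IsADMMTraj F g β S x y lam) (hβ : 0 < β)
    (hF : MonotoneOnSet F S) (hKKT : IsKKTPoint F g S xμ lamμ) :
    Tendsto (fun k => x (k + 1) - y (k + 1)) atTop (𝓝 0) :=
  tendsto_zero_of_norm_sq_dissipation (W := fun k => ‖lam k - lamμ‖ ^ 2 + β ^ 2 * ‖y k - xμ‖ ^ 2)
    (pow_pos hβ 2) (fun k => by positivity) fun k => by
      nlinarith [htraj.energy_descent hβ.le hF hKKT k, sq_nonneg (β * ‖y (k + 1) - y k‖)]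

theorem tendsto_dual_residual (htraj : IsADMMTraj F g β S x y lam) (hβ : 0 < β)
    (hF : MonotoneOnSet F S) (hKKT : IsKKTPoint F g S xμ lamμ) :
    Tendsto (fun k => y (k + 1) - y k) atTop (𝓝 0) :=
  tendsto_zero_of_norm_sq_dissipation (W := fun k => ‖lam k - lamμ‖ ^ 2 + β ^ 2 * ‖y k - xμ‖ ^ 2)
    (pow_pos hβ 2) (fun k => by positivity) fun k => by
      nlinarith [htraj.energy_descent hβ.le hF hKKT k, sq_nonneg (β * ‖x (k + 1) - y (k + 1)‖)]

theorem exists_norm_le (htraj : IsADMMTraj F g β S x y lam) (hβ : 0 < β)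
    (hF : MonotoneOnSet F S) (hKKT : IsKKTPoint F g S xμ lamμ) :
    ∃ C, ∀ k, ‖lam (k + 1)‖ ≤ C ∧ ‖x (k + 1) - xμ‖ ≤ C := by
  set W := fun k => ‖lam k - lamμ‖ ^ 2 + β ^ 2 * ‖y k - xμ‖ ^ 2
  have hdesc := htraj.energy_descent hβ.le hF hKKT
  have hanti : Antitone W := antitone_nat_of_succ_le fun k => by
    nlinarith [hdesc k, sq_nonneg (β * ‖x (k + 1) - y (k + 1)‖), sq_nonneg (β * ‖y (k + 1) - y k‖)]
  have hW0 : 0 ≤ W 0 := by positivity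
  have hle_sqrt {t : ℝ} (ht : 0 ≤ t) (h : t ^ 2 ≤ W 0) : t ≤ √(W 0) := (Real.le_sqrt ht hW0).2 h
  refine ⟨max (‖lamμ‖ + √(W 0)) (2 * √(W 0) / β), fun k => ⟨?_, ?_⟩⟩
  · have hlam : ‖lam (k + 1) - lamμ‖ ≤ √(W 0) := hle_sqrt (norm_nonneg _) <| by
      nlinarith [hanti (Nat.zero_le (k + 1)), sq_nonneg (β * ‖y (k + 1) - xμ‖)]
    exact le_max_of_le_left (by linarith [norm_le_norm_add_norm_sub' (lam (k + 1)) lamμ])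
  · have hy : β * ‖y (k + 1) - xμ‖ ≤ √(W 0) := hle_sqrt (by positivity) <| by
      nlinarith [hanti (Nat.zero_le (k + 1)), sq_nonneg ‖lam (k + 1) - lamμ‖]
    have hr : β * ‖x (k + 1) - y (k + 1)‖ ≤ √(W 0) := hle_sqrt (by positivity) <| by
      nlinarith [hdesc k, hanti (Nat.zero_le k), sq_nonneg ‖lam (k + 1) - lamμ‖,
        sq_nonneg (β * ‖y (k + 1) - xμ‖), sq_nonneg (β * ‖y (k + 1) - y k‖)]
    have htri := norm_sub_le_norm_sub_add_norm_sub (x (k + 1)) (y (k + 1)) xμ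
    refine le_max_of_le_right ((le_div_iff₀ hβ).2 ?_)
    nlinarith

end IsADMMTraj

end ADMM

/-- Theorem 3.1: asymptotic feasibility and value convergence. -/
theorem stmt_10 {n p : ℕ} (C : Matrix (Fin p) (Fin n) ℝ) (d : EuclideanSpace ℝ (Fin p))
    (F : EuclideanSpace ℝ (Fin n) → EuclideanSpace ℝ (Fin n))
    (g : EuclideanSpace ℝ (Fin n) → ℝ) (β : ℝ) (hβ : 0 < β)
    (hF : MonotoneOnSet F (CeqSet C d))
    (xμ yμ lamμ : EuclideanSpace ℝ (Fin n))
    (hKKT : IsKKTPoint F g (CeqSet C d) xμ lamμ) (hyμ : yμ = xμ)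
    (x y lam : ℕ → EuclideanSpace ℝ (Fin n))
    (htraj : IsADMMTraj F g β (CeqSet C d) x y lam) :
    Filter.Tendsto (fun k => x (k+1) - y (k+1)) Filter.atTop (nhds 0) ∧
    Filter.Tendsto (fun k => ⟪F xμ, x (k+1) - xμ⟫ + g (y (k+1)) - g yμ)
      Filter.atTop (nhds 0) ∧
    Filter.Tendsto (fun k => ⟪F (x (k+1)), x (k+1) - xμ⟫ + g (y (k+1)) - g yμ)
      Filter.atTop (nhds 0) := by
  subst yμ
  have hr := htraj.tendsto_primal_residual hβ hF hKKT
  have hr' : Tendsto (fun k => y (k + 1) - x (k + 1)) atTop (𝓝 0) := by simpa using hr.neg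
  have hs' : Tendsto (fun k => y k - y (k + 1)) atTop (𝓝 0) := by
    simpa using (htraj.tendsto_dual_residual hβ hF hKKT).neg
  obtain ⟨B, hB⟩ := htraj.exists_norm_le hβ hF hKKT
  have hlower : Tendsto (fun k => ⟪y (k + 1) - x (k + 1), lamμ⟫) atTop (𝓝 0) := by
    simpa using hr'.inner (tendsto_const_nhds (x := lamμ))
  have hupper : Tendsto (fun k => ⟪y (k + 1) - x (k + 1), lam (k + 1)⟫
      + β * ⟪y k - y (k + 1), x (k + 1) - xμ⟫) atTop (𝓝 0) := by
    have hlam := hr'.op_zero_isBoundedUnder_le (isBoundedUnder_of ⟨B, fun k => (hB k).1⟩)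
      (fun u v => ⟪u, v⟫) norm_inner_le_norm
    have hx := hs'.op_zero_isBoundedUnder_le (isBoundedUnder_of ⟨B, fun k => (hB k).2⟩)
      (fun u v => ⟪u, v⟫) norm_inner_le_norm
    simpa using hlam.add (hx.const_mul β)
  have hxS k : x (k + 1) ∈ CeqSet C d := (htraj.1 k).1
  have hmono k := hF.inner_le_inner (hxS k) hKKT.1
  refine ⟨hr, tendsto_of_tendsto_of_tendsto_of_le_of_le hlower hupper (fun k => ?_) (fun k => ?_),
    tendsto_of_tendsto_of_tendsto_of_le_of_le hlower hupper (fun k => ?_) (fun k => ?_)⟩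
  · exact hKKT.inner_le_gap (hxS k)
  · linarith [hmono k, htraj.gap_le hKKT.1 k]
  · linarith [hmono k, hKKT.inner_le_gap (v := y (k + 1)) (hxS k)]
  · exact htraj.gap_le hKKT.1 k
end

section
/- In the ADMM context, suppose F is ξ-monotone on C_= with constants c > 0 and ξ > 1, i.e., ⟪F x − F x', x − x'⟫ ≥ c‖x − x'‖^ξ for all x, x' ∈ C_=. Let (x^μ, λ^μ) be a KKT point with y^μ = x^μ, and let (x_k)_{k≥1}, (y_k)_{k≥0}, (λ_k)_{k≥0} be an ADMM trajectory. Then x_k → x^μ as k → ∞. -/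
open scoped RealInnerProductSpace

/-! The energy `‖λ_k - λ^μ‖² + β² ‖y_k - x^μ‖²` is nonnegative and, by the optimality conditions
of the two ADMM subproblems, the KKT conditions and the monotonicity of `∂g`, drops at step `k`
by at least `2β ⟪F x_{k+1} - F x^μ, x_{k+1} - x^μ⟫ ≥ 2βc ‖x_{k+1} - x^μ‖^ξ`. Telescoping makes
`‖x_k - x^μ‖^ξ` summable, hence it tends to `0`. -/

open Filter Topology

section NormedAddCommGroup

variable {E : Type*} [NormedAddCommGroup E]

theorem inner_sub_nonneg_of_subgradient_s11 [InnerProductSpace ℝ E] {g : E → ℝ} {u v a b : E}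
    (ha : ∀ z, g u + ⟪a, z - u⟫ ≤ g z) (hb : ∀ z, g v + ⟪b, z - v⟫ ≤ g z) :
    0 ≤ ⟪a - b, u - v⟫ := by
  have hu := ha v
  have hv := hb u
  rw [← neg_sub u v, inner_neg_right] at hu
  rw [inner_sub_left]
  linarith

def admmEnergy (β : ℝ) (xμ lamμ y lam : E) : ℝ :=
  ‖lam - lamμ‖ ^ 2 + β ^ 2 * ‖y - xμ‖ ^ 2

theorem admmEnergy_nonneg (β : ℝ) (xμ lamμ y lam : E) : 0 ≤ admmEnergy β xμ lamμ y lam := by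
  unfold admmEnergy
  positivity

/-- After substituting the dual update, the energy gap minus `2β ⟪F x⁺ - F x^μ, x⁺ - x^μ⟫` is
`2β` times the sum of the three hypotheses plus `β² ‖x⁺ - y_k‖²`. -/
theorem admmEnergy_sub_ge [InnerProductSpace ℝ E] {β : ℝ} (hβ : 0 ≤ β)
    {Fx Fm lamk lamm lam1 x1 xm yk y1 : E}
    (hx : 0 ≤ ⟪Fx + lamk + β • (x1 - yk), xm - x1⟫) (hm : 0 ≤ ⟪Fm + lamm, x1 - xm⟫)
    (hy : 0 ≤ ⟪lam1 - lamm, y1 - xm⟫) (hlam : lam1 = lamk + β • (x1 - y1)) :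
    2 * β * ⟪Fx - Fm, x1 - xm⟫ ≤
      admmEnergy β xm lamm yk lamk - admmEnergy β xm lamm y1 lam1 := by
  subst hlam
  have H := mul_nonneg (mul_nonneg zero_le_two hβ) (add_nonneg (add_nonneg hx hm) hy)
  have H' := mul_nonneg (sq_nonneg β) (real_inner_self_nonneg (x := x1 - yk))
  unfold admmEnergy
  simp only [← real_inner_self_eq_norm_sq, inner_sub_left, inner_sub_right, inner_add_left,
    inner_add_right, real_inner_smul_right, real_inner_comm] at H H' ⊢
  linarith

theorem tendsto_of_summable_norm_sub_rpow {u : ℕ → E} {a : E} {ξ : ℝ} (hξ : 0 < ξ)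
    (h : Summable fun k ↦ ‖u k - a‖ ^ ξ) : Tendsto u atTop (𝓝 a) := by
  rw [tendsto_iff_norm_sub_tendsto_zero]
  have := h.tendsto_atTop_zero.rpow_const_nhds_zero (inv_pos.2 hξ)
  simpa only [Real.rpow_rpow_inv (norm_nonneg _) hξ.ne'] using this

end NormedAddCommGroup

theorem summable_of_le_sub_succ {a W : ℕ → ℝ} (ha : ∀ k, 0 ≤ a k) (hW : ∀ k, 0 ≤ W k)
    (h : ∀ k, a k ≤ W k - W (k + 1)) : Summable a :=
  summable_of_sum_range_le ha fun N ↦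
    calc ∑ k ∈ Finset.range N, a k
        ≤ ∑ k ∈ Finset.range N, (W k - W (k + 1)) := Finset.sum_le_sum fun k _ ↦ h k
      _ = W 0 - W N := Finset.sum_range_sub' W N
      _ ≤ W 0 := sub_le_self _ (hW N)

theorem IsADMMStep.admmEnergy_sub_ge {n : ℕ}
    {F : EuclideanSpace ℝ (Fin n) → EuclideanSpace ℝ (Fin n)} {g : EuclideanSpace ℝ (Fin n) → ℝ}
    {β : ℝ} {S : Set (EuclideanSpace ℝ (Fin n))}
    {yk lamk x1 y1 lam1 xμ lamμ : EuclideanSpace ℝ (Fin n)}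
    (hstep : IsADMMStep F g β S yk lamk x1 y1 lam1) (hKKT : IsKKTPoint F g S xμ lamμ)
    (hβ : 0 ≤ β) :
    2 * β * ⟪F x1 - F xμ, x1 - xμ⟫ ≤
      admmEnergy β xμ lamμ yk lamk - admmEnergy β xμ lamμ y1 lam1 := by
  obtain ⟨hx1, hvar, hsub, hlam⟩ := hstep
  obtain ⟨hxμ, hvarμ, hsubμ⟩ := hKKT
  exact _root_.admmEnergy_sub_ge hβ (hvar xμ hxμ) (hvarμ x1 hx1)
    (inner_sub_nonneg_of_subgradient_s11 hsub hsubμ) hlam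

theorem stmt_11_general {n p : ℕ} (C : Matrix (Fin p) (Fin n) ℝ) (d : EuclideanSpace ℝ (Fin p))
    (F : EuclideanSpace ℝ (Fin n) → EuclideanSpace ℝ (Fin n))
    (g : EuclideanSpace ℝ (Fin n) → ℝ) (β : ℝ) (hβ : 0 < β)
    (c ξ : ℝ) (hc : 0 < c) (hξ : 1 < ξ)
    (hF : ∀ x ∈ CeqSet C d, ∀ x' ∈ CeqSet C d, c * ‖x - x'‖ ^ ξ ≤ ⟪F x - F x', x - x'⟫)
    (xμ lamμ : EuclideanSpace ℝ (Fin n))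
    (hKKT : IsKKTPoint F g (CeqSet C d) xμ lamμ)
    (x y lam : ℕ → EuclideanSpace ℝ (Fin n))
    (htraj : IsADMMTraj F g β (CeqSet C d) x y lam) :
    Filter.Tendsto x Filter.atTop (nhds xμ) := by
  set W : ℕ → ℝ := fun k ↦ admmEnergy β xμ lamμ (y k) (lam k)
  have hdescent : ∀ k, 2 * β * c * ‖x (k + 1) - xμ‖ ^ ξ ≤ W k - W (k + 1) := fun k ↦
    calc 2 * β * c * ‖x (k + 1) - xμ‖ ^ ξ
        = 2 * β * (c * ‖x (k + 1) - xμ‖ ^ ξ) := mul_assoc _ _ _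
      _ ≤ 2 * β * ⟪F (x (k + 1)) - F xμ, x (k + 1) - xμ⟫ := by
          gcongr
          exact hF _ (htraj.1 k).1 _ hKKT.1
      _ ≤ W k - W (k + 1) := (htraj.1 k).admmEnergy_sub_ge hKKT hβ.le
  have hsum : Summable fun k ↦ 2 * β * c * ‖x (k + 1) - xμ‖ ^ ξ :=
    summable_of_le_sub_succ (fun k ↦ by positivity) (fun k ↦ admmEnergy_nonneg _ _ _ _ _)
      hdescent
  rw [summable_mul_left_iff (by positivity)] at hsum
  exact (tendsto_add_atTop_iff_nat 1).mp (tendsto_of_summable_norm_sub_rpow (by linarith) hsum)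

/-- Theorem 3.1, last claim: iterate convergence under ξ-monotonicity. -/
theorem stmt_11 {n p : ℕ} (C : Matrix (Fin p) (Fin n) ℝ) (d : EuclideanSpace ℝ (Fin p))
    (F : EuclideanSpace ℝ (Fin n) → EuclideanSpace ℝ (Fin n))
    (g : EuclideanSpace ℝ (Fin n) → ℝ) (β : ℝ) (hβ : 0 < β)
    (c ξ : ℝ) (hc : 0 < c) (hξ : 1 < ξ)
    (hF : ∀ x ∈ CeqSet C d, ∀ x' ∈ CeqSet C d, c * ‖x - x'‖ ^ ξ ≤ ⟪F x - F x', x - x'⟫)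
    (xμ yμ lamμ : EuclideanSpace ℝ (Fin n))
    (hKKT : IsKKTPoint F g (CeqSet C d) xμ lamμ) (hyμ : yμ = xμ)
    (x y lam : ℕ → EuclideanSpace ℝ (Fin n))
    (htraj : IsADMMTraj F g β (CeqSet C d) x y lam) :
    Filter.Tendsto x Filter.atTop (nhds xμ) :=
  stmt_11_general C d F g β hβ c ξ hc hξ hF xμ lamμ hKKT x y lam htraj
end

section
/- In the ADMM context, suppose F is monotone on C_= and g is convex, let (x^μ, λ^μ) be a KKT point with y^μ = x^μ, let (x_k)_{k≥1}, (y_k)_{k≥0}, (λ_k)_{k≥0} be an ADMM trajectory, and set Δ = (1/β)‖λ_0 − λ^μ‖² + β‖y_0 − y^μ‖². Define the averages x̂_{K+1} = (1/(K+1))·Σ_{k=1}^{K+1} x_k and ŷ_{K+1} = (1/(K+1))·Σ_{k=1}^{K+1} y_k. Then for every K ≥ 0: |⟪F x^μ, x̂_{K+1} − x^μ⟫ + g(ŷ_{K+1}) − g(y^μ)| ≤ Δ/(2(K+1)) + 2√(βΔ)·‖λ^μ‖/(β(K+1)), and ‖x̂_{K+1} − ŷ_{K+1}‖ ≤ 2√(βΔ)/(β(K+1)).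 -/
open scoped RealInnerProductSpace

/-!
Along an ADMM trajectory the Lyapunov function `V_k = (1/β)‖λ_k − λ^μ‖² + β‖y_k − y^μ‖²`
decreases at each step by at least twice the gap
`G_k = ⟪F x^μ, x_{k+1} − x^μ⟫ + g(y_{k+1}) − g(y^μ)` shifted by `(1/β)⟪λ^μ, λ_{k+1} − λ_k⟫`;
this comes from the variational inequality of the x-step tested at `x^μ`, monotonicity of `F`,
and the subgradient inequalities of the y-steps, after polarizing the inner products.
The KKT conditions make the shifted gap nonnegative, so `V_k ≤ Δ` and every `λ_k` lies within
`√(βΔ)` of `λ^μ`. The dual step gives `x̂ − ŷ = (λ_{K+1} − λ_0)/(β(K+1))`, hence the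
feasibility bound. Summing the descent inequality telescopes the shifts into
`(1/β)⟪λ^μ, λ_{K+1} − λ_0⟫`, and Jensen's inequality for `g` passes the bound to the averages;
the lower bound is the KKT conditions evaluated at `(x̂, ŷ)`.
-/

open Finset

theorem Convex.inv_smul_sum_range_mem {E : Type*} [AddCommGroup E] [Module ℝ E] {s : Set E}
    (hs : Convex ℝ s) {v : ℕ → E} (hv : ∀ k, v k ∈ s) (K : ℕ) :
    ((K : ℝ) + 1)⁻¹ • ∑ k ∈ range (K + 1), v k ∈ s := by
  rw [smul_sum]
  refine hs.sum_mem (fun _ _ => by positivity) ?_ (fun k _ => hv k)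
  simp only [sum_const, card_range, nsmul_eq_mul]
  push_cast
  field_simp

section

variable {E : Type*} [NormedAddCommGroup E]

noncomputable def admmLyapunov (β : ℝ) (lamμ xμ lam y : E) : ℝ :=
  1 / β * ‖lam - lamμ‖ ^ 2 + β * ‖y - xμ‖ ^ 2

theorem norm_sub_le_sqrt_mul_admmLyapunov {β : ℝ} (hβ : 0 < β) (lamμ xμ lam y : E) :
    ‖lam - lamμ‖ ≤ √(β * admmLyapunov β lamμ xμ lam y) := by
  refine Real.le_sqrt_of_sq_le ?_
  have hy : 0 ≤ β * (β * ‖y - xμ‖ ^ 2) := by positivity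
  calc ‖lam - lamμ‖ ^ 2 = β * (1 / β * ‖lam - lamμ‖ ^ 2) := by field_simp
    _ ≤ β * admmLyapunov β lamμ xμ lam y := by unfold admmLyapunov; nlinarith

variable [InnerProductSpace ℝ E]

def kktGap (F : E → E) (g : E → ℝ) (xμ z w : E) : ℝ :=
  ⟪F xμ, z - xμ⟫ + g w - g xμ

theorem admmLyapunov_sub_eq {β : ℝ} (hβ : β ≠ 0) (lamμ xμ lam y x' y' lam' : E)
    (hlam' : lam' = lam + β • (x' - y')) :
    ⟪lam + β • (x' - y), xμ - x'⟫ + ⟪lam', y' - xμ⟫ + 1 / β * ⟪lamμ, lam' - lam⟫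
        + ⟪lam' - lam, y' - y⟫ + 1 / (2 * β) * ‖lam' - lam‖ ^ 2 + β / 2 * ‖y' - y‖ ^ 2 =
      (admmLyapunov β lamμ xμ lam y - admmLyapunov β lamμ xμ lam' y') / 2 := by
  subst hlam'
  simp only [admmLyapunov, ← real_inner_self_eq_norm_sq, inner_add_left, inner_add_right,
    inner_sub_left, inner_sub_right, real_inner_smul_right, real_inner_comm]
  field_simp
  ring

theorem kktGap_average_le_average {g : E → ℝ} (hg : ConvexOn ℝ Set.univ g) (F : E → E) (xμ : E)
    (v w : ℕ → E) (K : ℕ) :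
    kktGap F g xμ (((K : ℝ) + 1)⁻¹ • ∑ k ∈ range (K + 1), v k)
        (((K : ℝ) + 1)⁻¹ • ∑ k ∈ range (K + 1), w k) ≤
      ((K : ℝ) + 1)⁻¹ * ∑ k ∈ range (K + 1), kktGap F g xμ (v k) (w k) := by
  have hweights : ∑ _k ∈ range (K + 1), ((K : ℝ) + 1)⁻¹ = 1 := by
    simp only [sum_const, card_range, nsmul_eq_mul]
    push_cast
    field_simp
  have hjensen : g (((K : ℝ) + 1)⁻¹ • ∑ k ∈ range (K + 1), w k) ≤
      ((K : ℝ) + 1)⁻¹ * ∑ k ∈ range (K + 1), g (w k) := by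
    simpa [smul_sum, mul_sum] using
      hg.map_sum_le (fun _ _ => by positivity) hweights (fun k _ => Set.mem_univ (w k))
  have hlinear : ((K : ℝ) + 1)⁻¹ • ∑ k ∈ range (K + 1), v k - xμ =
      ((K : ℝ) + 1)⁻¹ • ∑ k ∈ range (K + 1), (v k - xμ) := by
    simp only [smul_sum, smul_sub, sum_sub_distrib, ← sum_smul, hweights, one_smul]
  have hconst : ((K : ℝ) + 1)⁻¹ * ∑ _k ∈ range (K + 1), g xμ = g xμ := by
    rw [mul_sum, ← sum_mul, hweights, one_mul]
  unfold kktGap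
  rw [hlinear, real_inner_smul_right, inner_sum, sum_sub_distrib, sum_add_distrib, mul_sub,
    mul_add, hconst]
  linarith

end

theorem convex_ceqSet {n p : ℕ} (C : Matrix (Fin p) (Fin n) ℝ) (d : EuclideanSpace ℝ (Fin p)) :
    Convex ℝ (CeqSet C d) :=
  (convex_singleton d).linear_preimage (Matrix.toEuclideanLin C)

section ADMM

variable {n : ℕ} {F : EuclideanSpace ℝ (Fin n) → EuclideanSpace ℝ (Fin n)}
  {g : EuclideanSpace ℝ (Fin n) → ℝ} {β : ℝ} {S : Set (EuclideanSpace ℝ (Fin n))}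
  {xμ lamμ : EuclideanSpace ℝ (Fin n)}

theorem IsKKTPoint.neg_inner_le_kktGap (hKKT : IsKKTPoint F g S xμ lamμ)
    {z : EuclideanSpace ℝ (Fin n)} (hz : z ∈ S) (w : EuclideanSpace ℝ (Fin n)) :
    -⟪lamμ, z - w⟫ ≤ kktGap F g xμ z w := by
  have hvi := hKKT.2.1 z hz
  have hsub := hKKT.2.2 w
  have hsplit : ⟪lamμ, z - w⟫ = ⟪lamμ, z - xμ⟫ - ⟪lamμ, w - xμ⟫ := by
    rw [← inner_sub_right, sub_sub_sub_cancel_right]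
  rw [inner_add_left] at hvi
  unfold kktGap
  linarith

theorem IsADMMStep.kktGap_add_inner_le (hβ : 0 < β) (hF : MonotoneOnSet F S)
    (hKKT : IsKKTPoint F g S xμ lamμ) {y lam x' y' lam' : EuclideanSpace ℝ (Fin n)}
    (hstep : IsADMMStep F g β S y lam x' y' lam') (hsub : ∀ z, g y + ⟪lam, z - y⟫ ≤ g z) :
    kktGap F g xμ x' y' + 1 / β * ⟪lamμ, lam' - lam⟫ ≤
      (admmLyapunov β lamμ xμ lam y - admmLyapunov β lamμ xμ lam' y') / 2 := by
  obtain ⟨hx', hvi, hsub', hlam'⟩ := hstep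
  have hFx : ⟪F xμ, x' - xμ⟫ ≤ ⟪lam + β • (x' - y), xμ - x'⟫ := by
    have hmono := hF x' hx' xμ hKKT.1
    have hvi' := hvi xμ hKKT.1
    rw [inner_sub_left] at hmono
    rw [add_assoc, inner_add_left] at hvi'
    have hflip : ⟪F x', xμ - x'⟫ = -⟪F x', x' - xμ⟫ := by rw [← inner_neg_right, neg_sub]
    linarith
  have hgy : g y' - g xμ ≤ ⟪lam', y' - xμ⟫ := by
    have h := hsub' xμ
    rw [← neg_sub, inner_neg_right] at h
    linarith
  have hsubdiff_mono : 0 ≤ ⟪lam' - lam, y' - y⟫ := by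
    have h1 := hsub' y
    have h2 := hsub y'
    rw [← neg_sub, inner_neg_right] at h1
    rw [inner_sub_left]
    linarith
  have hid := admmLyapunov_sub_eq hβ.ne' lamμ xμ lam y x' y' lam' hlam'
  have hsq : 0 ≤ 1 / (2 * β) * ‖lam' - lam‖ ^ 2 + β / 2 * ‖y' - y‖ ^ 2 := by positivity
  unfold kktGap
  linarith

theorem IsADMMStep.admmLyapunov_le (hβ : 0 < β) (hF : MonotoneOnSet F S)
    (hKKT : IsKKTPoint F g S xμ lamμ) {y lam x' y' lam' : EuclideanSpace ℝ (Fin n)}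
    (hstep : IsADMMStep F g β S y lam x' y' lam') (hsub : ∀ z, g y + ⟪lam, z - y⟫ ≤ g z) :
    admmLyapunov β lamμ xμ lam' y' ≤ admmLyapunov β lamμ xμ lam y := by
  have hlower := hKKT.neg_inner_le_kktGap hstep.1 y'
  have hupper := hstep.kktGap_add_inner_le hβ hF hKKT hsub
  have hdual : 1 / β * ⟪lamμ, lam' - lam⟫ = ⟪lamμ, x' - y'⟫ := by
    rw [hstep.2.2.2, add_sub_cancel_left, real_inner_smul_right]
    field_simp
  linarith

variable {x y lam : ℕ → EuclideanSpace ℝ (Fin n)}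

theorem IsADMMTraj.subgradient_s15 (htraj : IsADMMTraj F g β S x y lam) :
    ∀ k z, g (y k) + ⟪lam k, z - y k⟫ ≤ g z
  | 0 => htraj.2
  | k + 1 => (htraj.1 k).2.2.1

theorem IsADMMTraj.sum_sub_eq (hβ : β ≠ 0) (htraj : IsADMMTraj F g β S x y lam) (K : ℕ) :
    ∑ k ∈ range K, (x (k + 1) - y (k + 1)) = β⁻¹ • (lam K - lam 0) := by
  rw [← sum_range_sub, smul_sum]
  refine sum_congr rfl fun k _ => ?_
  rw [(htraj.1 k).2.2.2, add_sub_cancel_left, smul_smul, inv_mul_cancel₀ hβ, one_smul]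

section KKT

variable (hβ : 0 < β) (hF : MonotoneOnSet F S) (hKKT : IsKKTPoint F g S xμ lamμ)
  (htraj : IsADMMTraj F g β S x y lam)
include hβ hF hKKT htraj

theorem IsADMMTraj.admmLyapunov_le (k : ℕ) :
    admmLyapunov β lamμ xμ (lam k) (y k) ≤ admmLyapunov β lamμ xμ (lam 0) (y 0) :=
  antitone_nat_of_succ_le (f := fun k => admmLyapunov β lamμ xμ (lam k) (y k))
    (fun k => (htraj.1 k).admmLyapunov_le hβ hF hKKT (htraj.subgradient_s15 k)) (Nat.zero_le k)

theorem IsADMMTraj.norm_dual_sub_le (k : ℕ) :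
    ‖lam k - lam 0‖ ≤ 2 * √(β * admmLyapunov β lamμ xμ (lam 0) (y 0)) := by
  have hk : ‖lam k - lamμ‖ ≤ √(β * admmLyapunov β lamμ xμ (lam 0) (y 0)) :=
    (norm_sub_le_sqrt_mul_admmLyapunov hβ lamμ xμ (lam k) (y k)).trans <| Real.sqrt_le_sqrt <|
      mul_le_mul_of_nonneg_left (htraj.admmLyapunov_le hβ hF hKKT k) hβ.le
  have h0 := norm_sub_le_sqrt_mul_admmLyapunov hβ lamμ xμ (lam 0) (y 0)
  have htri := norm_sub_le_norm_sub_add_norm_sub (lam k) lamμ (lam 0)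
  rw [norm_sub_rev lamμ] at htri
  linarith

theorem IsADMMTraj.norm_average_sub_average_le (K : ℕ) :
    ‖((K : ℝ) + 1)⁻¹ • ∑ k ∈ range (K + 1), x (k + 1) -
        ((K : ℝ) + 1)⁻¹ • ∑ k ∈ range (K + 1), y (k + 1)‖ ≤
      2 * √(β * admmLyapunov β lamμ xμ (lam 0) (y 0)) / (β * (K + 1)) := by
  rw [← smul_sub, ← sum_sub_distrib, htraj.sum_sub_eq hβ.ne', smul_smul, norm_smul,
    Real.norm_of_nonneg (by positivity)]
  calc ((K : ℝ) + 1)⁻¹ * β⁻¹ * ‖lam (K + 1) - lam 0‖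
      ≤ ((K : ℝ) + 1)⁻¹ * β⁻¹ * (2 * √(β * admmLyapunov β lamμ xμ (lam 0) (y 0))) :=
        mul_le_mul_of_nonneg_left (htraj.norm_dual_sub_le hβ hF hKKT (K + 1)) (by positivity)
    _ = _ := by field_simp

theorem IsADMMTraj.sum_kktGap_le (K : ℕ) :
    ∑ k ∈ range (K + 1), kktGap F g xμ (x (k + 1)) (y (k + 1)) ≤
      admmLyapunov β lamμ xμ (lam 0) (y 0) / 2 +
        2 * √(β * admmLyapunov β lamμ xμ (lam 0) (y 0)) * ‖lamμ‖ / β := by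
  set V : ℕ → ℝ := fun k => admmLyapunov β lamμ xμ (lam k) (y k) with hV
  have hstep : ∀ k ∈ range (K + 1), kktGap F g xμ (x (k + 1)) (y (k + 1)) ≤
      (V k - V (k + 1)) / 2 - 1 / β * ⟪lamμ, lam (k + 1) - lam k⟫ := fun k _ => by
    linarith [(htraj.1 k).kktGap_add_inner_le hβ hF hKKT (htraj.subgradient_s15 k)]
  have htelescope : ∑ k ∈ range (K + 1),
      ((V k - V (k + 1)) / 2 - 1 / β * ⟪lamμ, lam (k + 1) - lam k⟫) =
        (V 0 - V (K + 1)) / 2 - 1 / β * ⟪lamμ, lam (K + 1) - lam 0⟫ := by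
    rw [sum_sub_distrib, ← sum_div, sum_range_sub', ← mul_sum, ← inner_sum, sum_range_sub]
  have hV_nonneg : 0 ≤ V (K + 1) := by simp only [hV, admmLyapunov]; positivity
  have hinner : -⟪lamμ, lam (K + 1) - lam 0⟫ ≤ ‖lamμ‖ * (2 * √(β * V 0)) :=
    (neg_le_abs _).trans <| (abs_real_inner_le_norm _ _).trans <|
      mul_le_mul_of_nonneg_left (htraj.norm_dual_sub_le hβ hF hKKT (K + 1)) (norm_nonneg _)
  have hscaled := mul_le_mul_of_nonneg_left hinner (one_div_nonneg.mpr hβ.le)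
  calc ∑ k ∈ range (K + 1), kktGap F g xμ (x (k + 1)) (y (k + 1))
      ≤ (V 0 - V (K + 1)) / 2 - 1 / β * ⟪lamμ, lam (K + 1) - lam 0⟫ :=
        htelescope ▸ sum_le_sum hstep
    _ ≤ V 0 / 2 + 1 / β * (‖lamμ‖ * (2 * √(β * V 0))) := by linarith
    _ = V 0 / 2 + 2 * √(β * V 0) * ‖lamμ‖ / β := by ring

theorem IsADMMTraj.kktGap_average_le (hg : ConvexOn ℝ Set.univ g) (K : ℕ) :
    kktGap F g xμ (((K : ℝ) + 1)⁻¹ • ∑ k ∈ range (K + 1), x (k + 1))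
        (((K : ℝ) + 1)⁻¹ • ∑ k ∈ range (K + 1), y (k + 1)) ≤
      admmLyapunov β lamμ xμ (lam 0) (y 0) / (2 * (K + 1)) +
        2 * √(β * admmLyapunov β lamμ xμ (lam 0) (y 0)) * ‖lamμ‖ / (β * (K + 1)) := by
  calc _ ≤ ((K : ℝ) + 1)⁻¹ * ∑ k ∈ range (K + 1), kktGap F g xμ (x (k + 1)) (y (k + 1)) :=
        kktGap_average_le_average hg F xμ (fun k => x (k + 1)) (fun k => y (k + 1)) K
    _ ≤ ((K : ℝ) + 1)⁻¹ * (admmLyapunov β lamμ xμ (lam 0) (y 0) / 2 +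
          2 * √(β * admmLyapunov β lamμ xμ (lam 0) (y 0)) * ‖lamμ‖ / β) :=
        mul_le_mul_of_nonneg_left (htraj.sum_kktGap_le hβ hF hKKT K) (by positivity)
    _ = _ := by field_simp

end KKT

end ADMM

/-- Theorem 3.3: average iterate bounds. -/
theorem stmt_15 {n p : ℕ} (C : Matrix (Fin p) (Fin n) ℝ) (d : EuclideanSpace ℝ (Fin p))
    (F : EuclideanSpace ℝ (Fin n) → EuclideanSpace ℝ (Fin n))
    (g : EuclideanSpace ℝ (Fin n) → ℝ) (β : ℝ) (hβ : 0 < β)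
    (hF : MonotoneOnSet F (CeqSet C d))
    (hg : ConvexOn ℝ Set.univ g)
    (xμ yμ lamμ : EuclideanSpace ℝ (Fin n))
    (hKKT : IsKKTPoint F g (CeqSet C d) xμ lamμ) (hyμ : yμ = xμ)
    (x y lam : ℕ → EuclideanSpace ℝ (Fin n))
    (htraj : IsADMMTraj F g β (CeqSet C d) x y lam)
    (Δ : ℝ) (hΔ : Δ = (1 / β) * ‖lam 0 - lamμ‖ ^ 2 + β * ‖y 0 - yμ‖ ^ 2) :
    ∀ K : ℕ,
      |⟪F xμ, (((K : ℝ) + 1)⁻¹ • ∑ k ∈ Finset.range (K+1), x (k+1)) - xμ⟫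
          + g (((K : ℝ) + 1)⁻¹ • ∑ k ∈ Finset.range (K+1), y (k+1)) - g yμ| ≤
        Δ / (2 * (K + 1)) + 2 * Real.sqrt (β * Δ) * ‖lamμ‖ / (β * (K + 1)) ∧
      ‖(((K : ℝ) + 1)⁻¹ • ∑ k ∈ Finset.range (K+1), x (k+1))
          - (((K : ℝ) + 1)⁻¹ • ∑ k ∈ Finset.range (K+1), y (k+1))‖ ≤
        2 * Real.sqrt (β * Δ) / (β * (K + 1)) := by
  subst yμ
  replace hΔ : admmLyapunov β lamμ xμ (lam 0) (y 0) = Δ := hΔ.symm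
  have hΔ_nonneg : 0 ≤ Δ := hΔ ▸ by unfold admmLyapunov; positivity
  intro K
  have hdiff := htraj.norm_average_sub_average_le hβ hF hKKT K
  have hupper := htraj.kktGap_average_le hβ hF hKKT hg K
  rw [hΔ] at hdiff hupper
  set xhat := ((K : ℝ) + 1)⁻¹ • ∑ k ∈ range (K + 1), x (k + 1)
  set yhat := ((K : ℝ) + 1)⁻¹ • ∑ k ∈ range (K + 1), y (k + 1)
  have hxhat : xhat ∈ CeqSet C d :=
    (convex_ceqSet C d).inv_smul_sum_range_mem (fun k => (htraj.1 k).1) K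
  refine ⟨abs_le.mpr ⟨?_, hupper⟩, hdiff⟩
  calc -(Δ / (2 * (K + 1)) + 2 * √(β * Δ) * ‖lamμ‖ / (β * (K + 1)))
      ≤ -(‖lamμ‖ * (2 * √(β * Δ) / (β * (K + 1)))) := by
        rw [mul_div_assoc', mul_comm ‖lamμ‖]
        linarith [show 0 ≤ Δ / (2 * (K + 1)) by positivity]
    _ ≤ -(‖lamμ‖ * ‖xhat - yhat‖) := neg_le_neg (mul_le_mul_of_nonneg_left hdiff (norm_nonneg _))
    _ ≤ -⟪lamμ, xhat - yhat⟫ := neg_le_neg (real_inner_le_norm _ _)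
    _ ≤ kktGap F g xμ xhat yhat := hKKT.neg_inner_le_kktGap hxhat yhat
end
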